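/- arXiv:2010.09069 — 5 statements merged into one kernel-verified Lean document; each statement's English description precedes it below -/
import Mathlib

section
/- Let α ∈ (0,1) be irrational with continued fraction expansion α = [0; a₁, a₂, …] satisfying a_k ≥ 64 for all k ≥ 1, let p_k/q_k be its convergents, and set D_k = q_k α − p_k. Let (b_k)_{k≥1} be positive integers with a_k/4 ≤ b_k ≤ a_k/2 for all k ≥ 1, and let γ = ∑_{k≥0} b_{k+1} D_k. Then 0 < α < 1/64, 0 ≤ γ < 1 − α, and ‖nα − γ‖ ≠ 0 for every n ∈ ℕ. -/
/-!
The errors `D_k = q_k α - p_k` alternate in sign, with `a_{k+2} |D_{k+1}| < |D_k|`. Hence, when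
`a_k ≥ 64` and `a_k/4 ≤ b_k ≤ a_k/2`, the terms `b_{k+1} D_k` of `γ` shrink at least by a factor
`32`, and every tail of the series lies within `1/31` of its first term; this gives the bounds on
`γ`. If `n α - γ = m`, split `γ` after `n + 1` terms: the partial sum is `S α - P` with
`0 ≤ S < q_{n+1}` (because `2 b_k ≤ a_k`), so the tail is `N α - M` with `|N| < q_{n+1}`. The tail
is nonzero yet smaller than `|D_n|`, contradicting the best approximation property of `D_n`
(or, when `N = 0`, the fact that a nonzero integer has absolute value at least `1`).
-/

open MeasureTheory Filter

/-- distance from `x` to the nearest integer. -/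
noncomputable def nint (x : ℝ) : ℝ := |x - round x|

/-- the `t`-th partial quotient of the continued fraction expansion of `γ`
(junk value `0` if the expansion has terminated before index `t`). -/
noncomputable def cfa (γ : ℝ) (t : ℕ) : ℤ :=
  match GenContFract.IntFractPair.stream γ t with
  | some p => p.b
  | none => 0

/-- numerator `p_t` of the `t`-th continued fraction convergent of `γ`. -/
noncomputable def cfp (γ : ℝ) : ℕ → ℤ
  | 0 => cfa γ 0
  | 1 => cfa γ 1 * cfa γ 0 + 1
  | (n + 2) => cfa γ (n + 2) * cfp γ (n + 1) + cfp γ n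

/-- denominator `q_t` of the `t`-th continued fraction convergent of `γ`. -/
noncomputable def cfq (γ : ℝ) : ℕ → ℤ
  | 0 => 1
  | 1 => cfa γ 1
  | (n + 2) => cfa γ (n + 2) * cfq γ (n + 1) + cfq γ n

open GenContFract Finset

theorem abs_add_eq_add_abs_of_mul_nonneg {R : Type*} [Ring R] [LinearOrder R]
    [IsStrictOrderedRing R] {a b : R} (h : 0 ≤ a * b) : |a + b| = |a| + |b| :=
  (abs_add_eq_add_abs_iff a b).2 (mul_nonneg_iff.1 h)

theorem abs_tsum_sub_le_of_abs_succ_le {t : ℕ → ℝ} {r : ℝ} (hr0 : 0 ≤ r) (hr1 : r < 1)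
    (h : ∀ k, |t (k + 1)| ≤ r * |t k|) : |∑' k, t k - t 0| ≤ r / (1 - r) * |t 0| := by
  have hgeom : ∀ k, |t (k + 1)| ≤ |t 0| * r * r ^ k := by
    intro k
    induction k with
    | zero => simpa [mul_comm] using h 0
    | succ k ih => calc
        |t (k + 2)| ≤ r * |t (k + 1)| := h (k + 1)
        _ ≤ r * (|t 0| * r * r ^ k) := by gcongr
        _ = |t 0| * r * r ^ (k + 1) := by ring
  have hg := (hasSum_geometric_of_lt_one hr0 hr1).mul_left (|t 0| * r)
  have hsum : Summable t := summable_of_ratio_norm_eventually_le hr1 (.of_forall h)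
  rw [hsum.tsum_eq_zero_add, add_sub_cancel_left]
  exact (tsum_of_norm_bounded (f := fun k => t (k + 1)) hg hgeom).trans_eq (by ring)

/-- `cfFr α k = [0; a_{k+1}, a_{k+2}, …]`, the `fr` field of `IntFractPair.stream α k`. -/
noncomputable def cfFr (α : ℝ) : ℕ → ℝ
  | 0 => Int.fract α
  | k + 1 => Int.fract (cfFr α k)⁻¹

noncomputable def cfD (α : ℝ) (k : ℕ) : ℝ := cfq α k * α - cfp α k

section ContinuedFraction

variable {α : ℝ}

theorem cfa_eq_of_stream_eq_some {k : ℕ} {p : IntFractPair ℝ}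
    (h : IntFractPair.stream α k = some p) : cfa α k = p.b := by
  simp [cfa, h]

theorem cfa_zero_eq_floor (α : ℝ) : cfa α 0 = ⌊α⌋ :=
  cfa_eq_of_stream_eq_some (IntFractPair.stream_zero α)

theorem irrational_cfFr (hirr : Irrational α) : ∀ k, Irrational (cfFr α k)
  | 0 => by simpa only [cfFr, ← Int.self_sub_floor] using hirr.sub_intCast _
  | k + 1 => by
    simpa only [cfFr, ← Int.self_sub_floor] using (irrational_cfFr hirr k).inv.sub_intCast _

theorem cfFr_pos (hirr : Irrational α) (k : ℕ) : 0 < cfFr α k := by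
  refine lt_of_le_of_ne ?_ (irrational_cfFr hirr k).ne_zero.symm
  cases k <;> exact Int.fract_nonneg _

theorem cfFr_lt_one (α : ℝ) (k : ℕ) : cfFr α k < 1 := by
  cases k <;> exact Int.fract_lt_one _

theorem stream_eq_some_cfa_cfFr (hirr : Irrational α) :
    ∀ k, IntFractPair.stream α k = some ⟨cfa α k, cfFr α k⟩
  | 0 => by rw [IntFractPair.stream_zero, cfa_zero_eq_floor]; rfl
  | k + 1 => by
    have h := IntFractPair.stream_succ_of_some (stream_eq_some_cfa_cfFr hirr k)
      (irrational_cfFr hirr k).ne_zero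
    rw [h, cfa_eq_of_stream_eq_some h]
    rfl

theorem cfa_succ_eq_floor (hirr : Irrational α) (k : ℕ) : cfa α (k + 1) = ⌊(cfFr α k)⁻¹⌋ :=
  cfa_eq_of_stream_eq_some <| IntFractPair.stream_succ_of_some
    (stream_eq_some_cfa_cfFr hirr k) (irrational_cfFr hirr k).ne_zero

theorem cfFr_mul_cfa_succ_add_cfFr_succ (hirr : Irrational α) (k : ℕ) :
    cfFr α k * (cfa α (k + 1) + cfFr α (k + 1)) = 1 := by
  rw [cfa_succ_eq_floor hirr, show cfFr α (k + 1) = Int.fract (cfFr α k)⁻¹ from rfl,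
    Int.floor_add_fract]
  exact mul_inv_cancel₀ (cfFr_pos hirr k).ne'

theorem cfa_succ_mul_cfFr_lt_one (hirr : Irrational α) (k : ℕ) :
    cfa α (k + 1) * cfFr α k < 1 := by
  have := cfFr_mul_cfa_succ_add_cfFr_succ hirr k
  nlinarith [mul_pos (cfFr_pos hirr k) (cfFr_pos hirr (k + 1))]

theorem one_le_cfa_succ (hirr : Irrational α) (k : ℕ) : 1 ≤ cfa α (k + 1) := by
  rw [cfa_succ_eq_floor hirr, Int.le_floor, Int.cast_one]
  exact (one_lt_inv₀ (cfFr_pos hirr k)).2 (cfFr_lt_one α k) |>.le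

theorem cfD_zero (α : ℝ) : cfD α 0 = cfFr α 0 := by
  rw [cfD, cfq, cfp, cfa_zero_eq_floor, cfFr, ← Int.self_sub_floor]
  push_cast
  ring

theorem cfD_add_two (α : ℝ) (k : ℕ) :
    cfD α (k + 2) = cfa α (k + 2) * cfD α (k + 1) + cfD α k := by
  simp only [cfD, cfp, cfq]
  push_cast
  ring

theorem cfD_succ (hirr : Irrational α) : ∀ k, cfD α (k + 1) = -cfFr α (k + 1) * cfD α k
  | 0 => by
    have hfr : α - ⌊α⌋ = cfFr α 0 := Int.self_sub_floor α
    rw [cfD_zero, cfD, cfq, cfp, cfa_zero_eq_floor]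
    push_cast
    linear_combination cfFr_mul_cfa_succ_add_cfFr_succ hirr 0 + (cfa α 1 : ℝ) * hfr
  | k + 1 => by
    rw [cfD_add_two, cfD_succ hirr k]
    linear_combination -cfD α k * cfFr_mul_cfa_succ_add_cfFr_succ hirr (k + 1)

theorem abs_cfD_succ (hirr : Irrational α) (k : ℕ) :
    |cfD α (k + 1)| = cfFr α (k + 1) * |cfD α k| := by
  rw [cfD_succ hirr, abs_mul, abs_neg, abs_of_pos (cfFr_pos hirr _)]

theorem cfD_ne_zero (hirr : Irrational α) : ∀ k, cfD α k ≠ 0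
  | 0 => cfD_zero α ▸ (cfFr_pos hirr 0).ne'
  | k + 1 => by
    rw [cfD_succ hirr]
    exact mul_ne_zero (neg_ne_zero.2 (cfFr_pos hirr _).ne') (cfD_ne_zero hirr k)

theorem cfD_mul_cfD_succ_neg (hirr : Irrational α) (k : ℕ) : cfD α k * cfD α (k + 1) < 0 := by
  rw [cfD_succ hirr]
  nlinarith [mul_pos (cfFr_pos hirr (k + 1)) (mul_self_pos.2 (cfD_ne_zero hirr k))]

theorem abs_cfD_lt_one (hirr : Irrational α) : ∀ k, |cfD α k| < 1
  | 0 => by rw [cfD_zero, abs_of_pos (cfFr_pos hirr 0)]; exact cfFr_lt_one α 0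
  | k + 1 => by
    rw [abs_cfD_succ hirr]
    exact mul_lt_one_of_nonneg_of_lt_one_left (cfFr_pos hirr _).le (cfFr_lt_one α _)
      (abs_cfD_lt_one hirr k).le

theorem cfa_mul_abs_cfD_succ_lt (hirr : Irrational α) (k : ℕ) :
    cfa α (k + 2) * |cfD α (k + 1)| < |cfD α k| := by
  rw [abs_cfD_succ hirr, ← mul_assoc]
  exact mul_lt_of_lt_one_left (abs_pos.2 (cfD_ne_zero hirr k))
    (cfa_succ_mul_cfFr_lt_one hirr (k + 1))

theorem cfp_succ_mul_cfq_sub (α : ℝ) :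
    ∀ k, cfp α (k + 1) * cfq α k - cfp α k * cfq α (k + 1) = (-1) ^ k
  | 0 => by simp only [cfp, cfq]; ring
  | k + 1 => by
    rw [pow_succ, ← cfp_succ_mul_cfq_sub α k]
    simp only [cfp, cfq]
    ring

theorem cfq_pos (hirr : Irrational α) : ∀ k, 0 < cfq α k
  | 0 => one_pos
  | 1 => one_le_cfa_succ hirr 0
  | k + 2 => by
    rw [cfq]
    nlinarith [one_le_cfa_succ hirr (k + 1), cfq_pos hirr k, cfq_pos hirr (k + 1)]

theorem cfq_le_cfq_succ (hirr : Irrational α) : ∀ k, cfq α k ≤ cfq α (k + 1)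
  | 0 => one_le_cfa_succ hirr 0
  | k + 1 => by
    rw [cfq]
    nlinarith [one_le_cfa_succ hirr (k + 1), cfq_pos hirr k, cfq_pos hirr (k + 1)]

theorem natCast_le_cfq (hirr : Irrational α) : ∀ k : ℕ, (k : ℤ) ≤ cfq α k
  | 0 => zero_le_one
  | 1 => one_le_cfa_succ hirr 0
  | k + 2 => by
    have hk := natCast_le_cfq hirr (k + 1)
    push_cast at hk ⊢
    rw [cfq]
    nlinarith [mul_le_mul_of_nonneg_right (one_le_cfa_succ hirr (k + 1)) (cfq_pos hirr (k + 1)).le,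
      cfq_pos hirr k]

theorem sum_cfa_mul_cfq (α : ℝ) :
    ∀ K, ∑ k ∈ range (K + 1), cfa α (k + 1) * cfq α k = cfq α (K + 1) + cfq α K - 1
  | 0 => by simp [cfq]
  | K + 1 => by
    simp only [sum_range_succ, sum_cfa_mul_cfq α K, cfq]
    ring

theorem exists_int_comb_cfq_cfp (α : ℝ) (J : ℕ) (N M : ℤ) : ∃ x y : ℤ,
    x * cfq α J + y * cfq α (J + 1) = N ∧ x * cfp α J + y * cfp α (J + 1) = M := by
  have hdet := cfp_succ_mul_cfq_sub α J
  have hsq : ((-1 : ℤ) ^ J) ^ 2 = 1 := by rw [← pow_mul, mul_comm, pow_mul, neg_one_sq, one_pow]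
  refine ⟨(-1) ^ J * (N * cfp α (J + 1) - M * cfq α (J + 1)),
    (-1) ^ J * (M * cfq α J - N * cfp α J), ?_, ?_⟩
  · linear_combination (-1) ^ J * N * hdet + N * hsq
  · linear_combination (-1) ^ J * M * hdet + M * hsq

/-- Lagrange's best approximation property of the convergents. -/
theorem abs_cfD_le_abs_sub (hirr : Irrational α) {J : ℕ} {N : ℤ} (M : ℤ) (hN : N ≠ 0)
    (hNq : |N| < cfq α (J + 1)) : |cfD α J| ≤ |N * α - M| := by
  obtain ⟨x, y, hq, hp⟩ := exists_int_comb_cfq_cfp α J N M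
  have hcomb : (N : ℝ) * α - M = x * cfD α J + y * cfD α (J + 1) := by
    rw [← hq, ← hp]; simp only [cfD]; push_cast; ring
  have hqJ := cfq_pos hirr J
  have hqJ1 := cfq_pos hirr (J + 1)
  have hxy : y = 0 ∨ x * y < 0 := by
    by_contra! h
    have : |y| * cfq α (J + 1) ≤ |N| := by
      rw [← hq, abs_add_eq_add_abs_of_mul_nonneg
        (by convert mul_nonneg h.2 (mul_pos hqJ hqJ1).le using 1; ring), abs_mul, abs_mul,
        abs_of_pos hqJ, abs_of_pos hqJ1]
      nlinarith [abs_nonneg x]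
    nlinarith [Int.one_le_abs h.1]
  have hx : x ≠ 0 := by
    rintro rfl
    rcases hxy with rfl | h
    · exact hN (by simpa using hq.symm)
    · simp at h
  have hsame : 0 ≤ x * cfD α J * (y * cfD α (J + 1)) := by
    rcases hxy with rfl | h
    · simp
    · have h' : (x : ℝ) * y < 0 := by exact_mod_cast h
      nlinarith [mul_pos_of_neg_of_neg h' (cfD_mul_cfD_succ_neg hirr J)]
  calc |cfD α J| ≤ |(x : ℝ)| * |cfD α J| :=
        le_mul_of_one_le_left (abs_nonneg _) (by exact_mod_cast Int.one_le_abs hx)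
    _ ≤ |x * cfD α J| + |y * cfD α (J + 1)| := by
        rw [abs_mul]; exact le_add_of_nonneg_right (abs_nonneg _)
    _ = |N * α - M| := by rw [hcomb, abs_add_eq_add_abs_of_mul_nonneg hsame]

theorem sum_range_mul_cfD (α : ℝ) (b : ℕ → ℤ) (K : ℕ) :
    ∑ k ∈ range K, (b (k + 1) : ℝ) * cfD α k =
      ((∑ k ∈ range K, b (k + 1) * cfq α k : ℤ) : ℝ) * α -
        ((∑ k ∈ range K, b (k + 1) * cfp α k : ℤ) : ℝ) := by
  push_cast
  simp only [cfD, mul_sub, sum_sub_distrib, sum_mul, mul_assoc]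

theorem sum_mul_cfq_lt_cfq (hirr : Irrational α) {b : ℕ → ℤ}
    (hb : ∀ k, 0 ≤ b (k + 1) ∧ 2 * b (k + 1) ≤ cfa α (k + 1)) (K : ℕ) :
    ∑ k ∈ range (K + 1), b (k + 1) * cfq α k < cfq α (K + 1) := by
  have h2 : 2 * ∑ k ∈ range (K + 1), b (k + 1) * cfq α k ≤ cfq α (K + 1) + cfq α K - 1 := by
    rw [← sum_cfa_mul_cfq, mul_sum]
    refine sum_le_sum fun k _ => ?_
    rw [← mul_assoc]
    exact mul_le_mul_of_nonneg_right (hb k).2 (cfq_pos hirr k).le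
  linarith [cfq_le_cfq_succ hirr K]

end ContinuedFraction

section Series

variable {α : ℝ} {b : ℕ → ℤ}

theorem cfFr_zero_eq_self (hα : α ∈ Set.Ico 0 1) : cfFr α 0 = α :=
  Int.fract_eq_self.2 hα

theorem cfa_one_mul_lt_one (hα : α ∈ Set.Ioo 0 1) (hirr : Irrational α) : cfa α 1 * α < 1 := by
  simpa only [cfFr_zero_eq_self (Set.Ioo_subset_Ico_self hα)]
    using cfa_succ_mul_cfFr_lt_one hirr 0

theorem nonneg_and_two_mul_le_cfa (hirr : Irrational α)
    (hb : ∀ k, 1 ≤ k → (cfa α k : ℝ) / 4 ≤ b k ∧ (b k : ℝ) ≤ cfa α k / 2)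
    (k : ℕ) : 0 ≤ b (k + 1) ∧ 2 * b (k + 1) ≤ cfa α (k + 1) := by
  have h := hb (k + 1) (Nat.le_add_left 1 k)
  have ha : (1 : ℝ) ≤ cfa α (k + 1) := by exact_mod_cast one_le_cfa_succ hirr k
  constructor
  · exact_mod_cast (show (0 : ℝ) ≤ b (k + 1) by linarith)
  · exact_mod_cast (show (2 * b (k + 1) : ℝ) ≤ cfa α (k + 1) by linarith)

theorem sixteen_mul_abs_cfD_le (ha : ∀ k, 1 ≤ k → 64 ≤ cfa α k)
    (hb : ∀ k, 1 ≤ k → (cfa α k : ℝ) / 4 ≤ b k ∧ (b k : ℝ) ≤ cfa α k / 2)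
    (k : ℕ) : 16 * |cfD α k| ≤ |b (k + 1) * cfD α k| := by
  have h64 : (64 : ℝ) ≤ cfa α (k + 1) := by exact_mod_cast ha (k + 1) (Nat.le_add_left 1 k)
  have h16 : (16 : ℝ) ≤ b (k + 1) := by linarith [(hb (k + 1) (Nat.le_add_left 1 k)).1]
  rw [abs_mul]
  gcongr
  exact h16.trans (le_abs_self _)

theorem abs_mul_cfD_succ_lt (hirr : Irrational α)
    (hb : ∀ k, 1 ≤ k → (cfa α k : ℝ) / 4 ≤ b k ∧ (b k : ℝ) ≤ cfa α k / 2)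
    (k : ℕ) : |b (k + 2) * cfD α (k + 1)| < |cfD α k| / 2 := by
  have hb0 : (0 : ℝ) ≤ b (k + 2) := by exact_mod_cast (nonneg_and_two_mul_le_cfa hirr hb (k + 1)).1
  rw [abs_mul, abs_of_nonneg hb0]
  calc (b (k + 2) : ℝ) * |cfD α (k + 1)| ≤ cfa α (k + 2) / 2 * |cfD α (k + 1)| := by
        gcongr; exact (hb (k + 2) (Nat.le_add_left 1 _)).2
    _ < |cfD α k| / 2 := by linarith [cfa_mul_abs_cfD_succ_lt hirr k]

theorem abs_mul_cfD_succ_le (hirr : Irrational α) (ha : ∀ k, 1 ≤ k → 64 ≤ cfa α k)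
    (hb : ∀ k, 1 ≤ k → (cfa α k : ℝ) / 4 ≤ b k ∧ (b k : ℝ) ≤ cfa α k / 2)
    (k : ℕ) : |b (k + 2) * cfD α (k + 1)| ≤ 1 / 32 * |b (k + 1) * cfD α k| := by
  linarith [abs_mul_cfD_succ_lt hirr hb k, sixteen_mul_abs_cfD_le ha hb k]

theorem summable_mul_cfD (hirr : Irrational α) (ha : ∀ k, 1 ≤ k → 64 ≤ cfa α k)
    (hb : ∀ k, 1 ≤ k → (cfa α k : ℝ) / 4 ≤ b k ∧ (b k : ℝ) ≤ cfa α k / 2) :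
    Summable fun k => (b (k + 1) : ℝ) * cfD α k :=
  summable_of_ratio_norm_eventually_le (by norm_num : (1 / 32 : ℝ) < 1)
    (.of_forall (abs_mul_cfD_succ_le hirr ha hb))

theorem abs_tsum_mul_cfD_sub_le (hirr : Irrational α)
    (ha : ∀ k, 1 ≤ k → 64 ≤ cfa α k)
    (hb : ∀ k, 1 ≤ k → (cfa α k : ℝ) / 4 ≤ b k ∧ (b k : ℝ) ≤ cfa α k / 2)
    (K : ℕ) : |∑' j, (b (j + K + 1) : ℝ) * cfD α (j + K) - b (K + 1) * cfD α K| ≤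
      |b (K + 1) * cfD α K| / 31 := by
  have h := abs_tsum_sub_le_of_abs_succ_le (t := fun j => (b (j + K + 1) : ℝ) * cfD α (j + K))
    (r := 1 / 32) (by norm_num) (by norm_num) fun j => by
      simpa only [add_right_comm j 1 K] using abs_mul_cfD_succ_le hirr ha hb (j + K)
  simp only [zero_add] at h
  exact h.trans_eq (by ring)

theorem abs_tsum_mul_cfD_pos_and_lt (hirr : Irrational α)
    (ha : ∀ k, 1 ≤ k → 64 ≤ cfa α k)
    (hb : ∀ k, 1 ≤ k → (cfa α k : ℝ) / 4 ≤ b k ∧ (b k : ℝ) ≤ cfa α k / 2)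
    (n : ℕ) : 0 < |∑' j, (b (j + (n + 1) + 1) : ℝ) * cfD α (j + (n + 1))| ∧
      |∑' j, (b (j + (n + 1) + 1) : ℝ) * cfD α (j + (n + 1))| < |cfD α n| := by
  set T := ∑' j, (b (j + (n + 1) + 1) : ℝ) * cfD α (j + (n + 1))
  set t := (b (n + 1 + 1) : ℝ) * cfD α (n + 1)
  have htail : |T - t| ≤ |t| / 31 := abs_tsum_mul_cfD_sub_le hirr ha hb (n + 1)
  have ht : 16 * |cfD α (n + 1)| ≤ |t| := sixteen_mul_abs_cfD_le ha hb (n + 1)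
  have ht' : |t| < |cfD α n| / 2 := abs_mul_cfD_succ_lt hirr hb n
  have hD := abs_pos.2 (cfD_ne_zero hirr (n + 1))
  have h1 := abs_sub_abs_le_abs_sub T t
  have h2 := abs_sub_abs_le_abs_sub t T
  rw [abs_sub_comm] at h2
  constructor <;> linarith

theorem tsum_mul_cfD_nonneg_and_lt (hα : α ∈ Set.Ioo 0 1) (hirr : Irrational α)
    (ha : ∀ k, 1 ≤ k → 64 ≤ cfa α k)
    (hb : ∀ k, 1 ≤ k → (cfa α k : ℝ) / 4 ≤ b k ∧ (b k : ℝ) ≤ cfa α k / 2) :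
    0 ≤ ∑' k, (b (k + 1) : ℝ) * cfD α k ∧ ∑' k, (b (k + 1) : ℝ) * cfD α k < 1 - α := by
  have hD0 : cfD α 0 = α := (cfD_zero α).trans (cfFr_zero_eq_self (Set.Ioo_subset_Ico_self hα))
  have htail := abs_tsum_mul_cfD_sub_le hirr ha hb 0
  simp only [add_zero, hD0] at htail
  have h64 : (64 : ℝ) ≤ cfa α 1 := by exact_mod_cast ha 1 le_rfl
  have hb1 := hb 1 le_rfl
  have hlt := cfa_one_mul_lt_one hα hirr
  have ht0 : 0 < (b 1 : ℝ) * α := mul_pos (by linarith) hα.1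
  have ht0' : (b 1 : ℝ) * α ≤ cfa α 1 * α / 2 := by nlinarith [hα.1]
  rw [abs_of_pos ht0] at htail
  obtain ⟨hlo, hhi⟩ := abs_le.1 htail
  constructor <;> nlinarith [hα.1]

theorem natCast_mul_sub_tsum_mul_cfD_ne_intCast (hirr : Irrational α)
    (ha : ∀ k, 1 ≤ k → 64 ≤ cfa α k)
    (hb : ∀ k, 1 ≤ k → (cfa α k : ℝ) / 4 ≤ b k ∧ (b k : ℝ) ≤ cfa α k / 2)
    (n : ℕ) (m : ℤ) : (n : ℝ) * α - ∑' k, (b (k + 1) : ℝ) * cfD α k ≠ m := by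
  intro h
  set S := ∑ k ∈ range (n + 1), b (k + 1) * cfq α k
  set P := ∑ k ∈ range (n + 1), b (k + 1) * cfp α k
  have htail : ∑' j, (b (j + (n + 1) + 1) : ℝ) * cfD α (j + (n + 1)) =
      ((n - S : ℤ) : ℝ) * α - ((m - P : ℤ) : ℝ) := by
    have hsplit := (summable_mul_cfD hirr ha hb).sum_add_tsum_nat_add (n + 1)
    rw [sum_range_mul_cfD] at hsplit
    push_cast
    linarith
  obtain ⟨hpos, hlt⟩ := abs_tsum_mul_cfD_pos_and_lt hirr ha hb n
  rw [htail] at hpos hlt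
  rcases eq_or_ne (n - S : ℤ) 0 with hN | hN
  · rw [hN, Int.cast_zero, zero_mul, zero_sub, abs_neg] at hpos hlt
    have hM : m - P ≠ 0 := by rintro hM; simp [hM] at hpos
    have : (1 : ℝ) ≤ |((m - P : ℤ) : ℝ)| := by exact_mod_cast Int.one_le_abs hM
    linarith [abs_cfD_lt_one hirr n]
  · have hb' := nonneg_and_two_mul_le_cfa hirr hb
    have hS := sum_mul_cfq_lt_cfq hirr hb' n
    have hS0 : 0 ≤ S := sum_nonneg fun k _ => mul_nonneg (hb' k).1 (cfq_pos hirr k).le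
    have hn := natCast_le_cfq hirr (n + 1)
    push_cast at hn
    have hNq : |(n - S : ℤ)| < cfq α (n + 1) := abs_lt.2 ⟨by linarith, by linarith⟩
    exact (abs_cfD_le_abs_sub hirr (m - P) hN hNq).not_gt hlt

end Series

theorem dandy_andy_setup_general
    (α : ℝ) (hαmem : α ∈ Set.Ioo (0 : ℝ) 1) (hirr : Irrational α)
    (ha : ∀ k : ℕ, 1 ≤ k → (64 : ℤ) ≤ cfa α k)
    (b : ℕ → ℤ)
    (hb : ∀ k : ℕ, 1 ≤ k →
      (cfa α k : ℝ) / 4 ≤ (b k : ℝ) ∧ (b k : ℝ) ≤ (cfa α k : ℝ) / 2)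
    (γ : ℝ)
    (hγ : γ = ∑' k : ℕ, (b (k + 1) : ℝ) * ((cfq α k : ℝ) * α - (cfp α k : ℝ))) :
    0 < α ∧ α < 1 / 64 ∧ 0 ≤ γ ∧ γ < 1 - α ∧
      ∀ n : ℕ, 0 < n → nint ((n : ℝ) * α - γ) ≠ 0 := by
  change γ = ∑' k, (b (k + 1) : ℝ) * cfD α k at hγ
  subst hγ
  have hα64 : α < 1 / 64 := by
    have h64 : (64 : ℝ) ≤ cfa α 1 := by exact_mod_cast ha 1 le_rfl
    nlinarith [cfa_one_mul_lt_one hαmem hirr, hαmem.1]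
  obtain ⟨hγ0, hγ1⟩ := tsum_mul_cfD_nonneg_and_lt hαmem hirr ha hb
  refine ⟨hαmem.1, hα64, hγ0, hγ1, fun n _ h => ?_⟩
  rw [nint, abs_eq_zero, sub_eq_zero] at h
  exact natCast_mul_sub_tsum_mul_cfD_ne_intCast hirr ha hb n _ h

/-- Let `α ∈ (0,1)` be irrational with partial quotients `a_k = cfa α k ≥ 64`
for `k ≥ 1`, let `D_k = q_k α - p_k`, let `(b_k)` be positive integers with
`a_k/4 ≤ b_k ≤ a_k/2`, and let `γ = ∑_{k≥0} b_{k+1} D_k`.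
Then `0 < α < 1/64`, `0 ≤ γ < 1 - α`, and `‖n α - γ‖ ≠ 0` for all `n ∈ ℕ`. -/
theorem dandy_andy_setup
    (α : ℝ) (hαmem : α ∈ Set.Ioo (0 : ℝ) 1) (hirr : Irrational α)
    (ha : ∀ k : ℕ, 1 ≤ k → (64 : ℤ) ≤ cfa α k)
    (b : ℕ → ℤ) (hbpos : ∀ k : ℕ, 1 ≤ k → 0 < b k)
    (hb : ∀ k : ℕ, 1 ≤ k →
      (cfa α k : ℝ) / 4 ≤ (b k : ℝ) ∧ (b k : ℝ) ≤ (cfa α k : ℝ) / 2)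
    (γ : ℝ)
    (hγ : γ = ∑' k : ℕ, (b (k + 1) : ℝ) * ((cfq α k : ℝ) * α - (cfp α k : ℝ))) :
    0 < α ∧ α < 1 / 64 ∧ 0 ≤ γ ∧ γ < 1 - α ∧
      ∀ n : ℕ, 0 < n → nint ((n : ℝ) * α - γ) ≠ 0 :=
  dandy_andy_setup_general α hαmem hirr ha b hb γ hγ
end

section
/- Let d ∈ ℕ and let ψ : ℕ → ℝ_{>0} be non-increasing such that ∑_{n≥1} ψ(n)(log n)^d diverges. Then there exists a strictly increasing sequence (K_i)_{i≥1} of positive integers with K₁ = 1, K_i ≥ exp(exp i) for all i ≥ 2, and K_i = o(K_{i+1}), such that: (1) the function f defined by f(n) = i for K_i ≤ n < K_{i+1} satisfies f(n) ≪ log log n; and (2) the series ∑_{n≥1} ψ(4^{f(n)} n)(log n)^d diverges. -/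
open Filter Asymptotics

/-- `log x = max (ln x, 1)`. -/
noncomputable def plog (x : ℝ) : ℝ := max (Real.log x) 1

/-!
Choose `K` recursively: given `K i`, take `K (i+1)` so large that the tail
`∑_{4^i K_i ≤ m < 4^i K_{i+1}} ψ(m) (log m)^d` exceeds `4^i (1 + log (2·4^i))^d`. Since `ψ` is
non-increasing, each block `4^i n ≤ m < 4^i (n+1)` contributes at most
`4^i (1 + log (2·4^i))^d ψ(4^i n) (log n)^d`, so the sum of `ψ(4^{f n} n) (log n)^d` over
`K_i ≤ n < K_{i+1}` is at least `1`. The growth conditions on `K` are imposed in the same step,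
and `K_i ≥ exp (exp i)` forces `f n ≤ log log n`.
-/

open Finset

lemma one_le_plog (x : ℝ) : 1 ≤ plog x := le_max_right _ _

lemma plog_pos (x : ℝ) : 0 < plog x := one_pos.trans_le (one_le_plog x)

lemma plog_le_plog {x y : ℝ} (hx : 0 < x) (hxy : x ≤ y) : plog x ≤ plog y :=
  max_le_max_right 1 (Real.log_le_log hx hxy)

lemma plog_mul_le {a x : ℝ} (ha : 1 ≤ a) (hx : 0 < x) :
    plog (a * x) ≤ (1 + Real.log a) * plog x := by
  have hloga : 0 ≤ Real.log a := Real.log_nonneg ha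
  have hlogx : Real.log x ≤ plog x := le_max_left _ _
  have hplogx := one_le_plog x
  refine max_le ?_ (by nlinarith)
  rw [Real.log_mul (by linarith) hx.ne']
  nlinarith

lemma le_plog_plog_of_exp_exp_le {x y : ℝ} (h : Real.exp (Real.exp x) ≤ y) :
    x ≤ plog (plog y) := by
  have hy : 0 < y := (Real.exp_pos _).trans_le h
  have hexp : Real.exp x ≤ plog y := ((Real.le_log_iff_exp_le hy).2 h).trans (le_max_left _ _)
  exact ((Real.le_log_iff_exp_le (plog_pos y)).2 hexp).trans (le_max_left _ _)

lemma sum_Ico_mul_eq_sum_blocks {M : Type*} [AddCommMonoid M] (q : ℕ) (g : ℕ → M) {a b : ℕ}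
    (hab : a ≤ b) :
    ∑ m ∈ Ico (q * a) (q * b), g m = ∑ n ∈ Ico a b, ∑ m ∈ Ico (q * n) (q * (n + 1)), g m := by
  induction b, hab using Nat.le_induction with
  | base => simp
  | succ b hab ih =>
    rw [sum_Ico_succ_top hab, ← ih,
      sum_Ico_consecutive g (Nat.mul_le_mul_left q hab) (Nat.mul_le_mul_left q b.le_succ)]

section Antitone

variable {ψ : ℕ → ℝ} (d : ℕ)

lemma sum_Ico_mul_succ_le (hψ0 : ∀ n, 0 ≤ ψ n) (hψ : Antitone ψ) {q n : ℕ} (hq : 1 ≤ q)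
    (hn : 1 ≤ n) :
    ∑ m ∈ Ico (q * n) (q * (n + 1)), ψ m * plog m ^ d
      ≤ q * (1 + Real.log (2 * q)) ^ d * (ψ (q * n) * plog n ^ d) := by
  have hterm : ∀ m ∈ Ico (q * n) (q * (n + 1)),
      ψ m * plog m ^ d ≤ ψ (q * n) * ((1 + Real.log (2 * q)) * plog n) ^ d := by
    intro m hm
    obtain ⟨hm₁, hm₂⟩ := mem_Ico.1 hm
    have hm_pos : (0 : ℝ) < m := by exact_mod_cast (Nat.mul_pos hq hn).trans_le hm₁
    have hm_le : (m : ℝ) ≤ 2 * q * n := by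
      have : m ≤ 2 * q * n := by nlinarith
      exact_mod_cast this
    have hplog : plog m ≤ (1 + Real.log (2 * q)) * plog n :=
      (plog_le_plog hm_pos hm_le).trans
        (plog_mul_le (by norm_cast; omega) (by exact_mod_cast hn))
    exact mul_le_mul (hψ hm₁) (pow_le_pow_left₀ (plog_pos m).le hplog d)
      (pow_nonneg (plog_pos m).le d) (hψ0 _)
  calc ∑ m ∈ Ico (q * n) (q * (n + 1)), ψ m * plog m ^ d
      ≤ ∑ _m ∈ Ico (q * n) (q * (n + 1)), ψ (q * n) * ((1 + Real.log (2 * q)) * plog n) ^ d :=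
        sum_le_sum hterm
    _ = q * (1 + Real.log (2 * q)) ^ d * (ψ (q * n) * plog n ^ d) := by
      rw [sum_const, Nat.card_Ico, Nat.mul_succ, Nat.add_sub_cancel_left, nsmul_eq_mul, mul_pow]
      ring

lemma sum_Ico_mul_le (hψ0 : ∀ n, 0 ≤ ψ n) (hψ : Antitone ψ) {q a b : ℕ} (hq : 1 ≤ q)
    (ha : 1 ≤ a) (hab : a ≤ b) :
    ∑ m ∈ Ico (q * a) (q * b), ψ m * plog m ^ d
      ≤ q * (1 + Real.log (2 * q)) ^ d * ∑ n ∈ Ico a b, ψ (q * n) * plog n ^ d := by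
  rw [sum_Ico_mul_eq_sum_blocks q _ hab, mul_sum]
  exact sum_le_sum fun n hn => sum_Ico_mul_succ_le d hψ0 hψ hq (ha.trans (mem_Ico.1 hn).1)

lemma one_le_sum_Ico_of_le_sum_Ico_mul (hψ0 : ∀ n, 0 ≤ ψ n) (hψ : Antitone ψ) {q a b : ℕ}
    (hq : 1 ≤ q) (ha : 1 ≤ a) (hab : a ≤ b)
    (h : q * (1 + Real.log (2 * q)) ^ d ≤ ∑ m ∈ Ico (q * a) (q * b), ψ m * plog m ^ d) :
    1 ≤ ∑ n ∈ Ico a b, ψ (q * n) * plog n ^ d := by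
  have hlog : 0 ≤ Real.log (2 * q) := Real.log_nonneg (by norm_cast; omega)
  have hq' : (0 : ℝ) < q := by exact_mod_cast hq
  exact (le_mul_iff_one_le_right (by positivity)).1 (h.trans (sum_Ico_mul_le d hψ0 hψ hq ha hab))

end Antitone

lemma tendsto_sum_Ico_atTop_of_not_summable {g : ℕ → ℝ} (hg : ∀ n, 0 ≤ g n)
    (hdiv : ¬ Summable g) (a : ℕ) :
    Tendsto (fun M => ∑ m ∈ Ico a M, g m) atTop atTop := by
  refine (tendsto_atTop_add_const_right _ (-∑ m ∈ range a, g m)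
    ((not_summable_iff_tendsto_nat_atTop_of_nonneg hg).1 hdiv)).congr' ?_
  filter_upwards [eventually_ge_atTop a] with M hM
  rw [← sum_range_add_sum_Ico g hM]
  ring

lemma not_summable_of_one_le_sum_Ico {u : ℕ → ℝ} (hu : ∀ n, 0 ≤ u n) {K : ℕ → ℕ}
    (hK : Monotone K) (h : ∀ i, 1 ≤ i → 1 ≤ ∑ n ∈ Ico (K i) (K (i + 1)), u n) :
    ¬ Summable u := by
  have hpartial : ∀ I : ℕ, (I : ℝ) ≤ ∑ n ∈ range (K (I + 1)), u n := by
    intro I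
    induction I with
    | zero => exact_mod_cast sum_nonneg fun n _ => hu n
    | succ I ih =>
      rw [← sum_range_add_sum_Ico u (hK (I + 1).le_succ)]
      push_cast
      linarith [h (I + 1) (by omega)]
  intro hs
  obtain ⟨I, hI⟩ := exists_nat_gt (∑' n, u n)
  linarith [hpartial I, hs.sum_le_tsum (range (K (I + 1))) fun n _ => hu n]

lemma exists_strictMono_forall_eventually (P : ℕ → ℕ → ℕ → Prop)
    (hP : ∀ i k, ∀ᶠ M in atTop, P i k M) :
    ∃ K : ℕ → ℕ, StrictMono K ∧ K 0 = 0 ∧ K 1 = 1 ∧ ∀ i, 1 ≤ i → P i (K i) (K (i + 1)) := by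
  choose s hs using fun i k => ((eventually_gt_atTop k).and (hP i k)).exists
  let K : ℕ → ℕ := fun i => Nat.rec 0 (fun j k => if j = 0 then 1 else s j k) i
  have hK : ∀ i, 1 ≤ i → K (i + 1) = s i (K i) := fun i hi => if_neg (by omega)
  refine ⟨K, strictMono_nat_of_lt_succ fun i => ?_, rfl, rfl, fun i hi => hK i hi ▸ (hs i (K i)).2⟩
  rcases Nat.eq_zero_or_pos i with rfl | hi
  · exact one_pos
  · exact hK i hi ▸ (hs i (K i)).1

lemma isLittleO_of_natCast_mul_le {u v : ℕ → ℝ} (hu : ∀ i, 0 ≤ u i)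
    (h : ∀ᶠ i : ℕ in atTop, (i : ℝ) * u i ≤ v i) : u =o[atTop] v := by
  refine isLittleO_iff.2 fun ε hε => ?_
  filter_upwards [h, eventually_ge_atTop ⌈ε⁻¹⌉₊] with i hi hi_ge
  have hεi : 1 ≤ ε * i := by
    rw [← inv_le_iff_one_le_mul₀' hε]
    exact (Nat.le_ceil _).trans (by exact_mod_cast hi_ge)
  rw [Real.norm_of_nonneg (hu i)]
  calc u i ≤ ε * i * u i := le_mul_of_one_le_left (hu i) hεi
    _ = ε * ((i : ℝ) * u i) := mul_assoc _ _ _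
    _ ≤ ε * ‖v i‖ := mul_le_mul_of_nonneg_left (hi.trans (Real.le_norm_self _)) hε.le

lemma findGreatest_le_plog_plog {K : ℕ → ℕ} (hK0 : K 0 = 0)
    (hK : ∀ i : ℕ, 2 ≤ i → Real.exp (Real.exp i) ≤ K i) (n : ℕ) :
    (Nat.findGreatest (fun j => K j ≤ n) n : ℝ) ≤ plog (plog n) := by
  set i := Nat.findGreatest (fun j => K j ≤ n) n
  rcases le_or_gt i 1 with hi | hi
  · exact (Nat.cast_le_one.2 hi).trans (one_le_plog _)
  · have hKi : K i ≤ n :=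
      Nat.findGreatest_spec (P := fun j => K j ≤ n) (Nat.zero_le n) (by simp [hK0])
    exact le_plog_plog_of_exp_exp_le ((hK i hi).trans (by exact_mod_cast hKi))

lemma Nat.findGreatest_eq_of_le_of_lt {K : ℕ → ℕ} (hK : StrictMono K) {i n : ℕ}
    (hi : K i ≤ n) (hn : n < K (i + 1)) :
    Nat.findGreatest (fun j => K j ≤ n) n = i := by
  have hin : i ≤ n := (hK.id_le i).trans hi
  refine le_antisymm ?_ (Nat.le_findGreatest hin hi)
  have hspec := Nat.findGreatest_spec (P := fun j => K j ≤ n) hin hi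
  exact Nat.lt_succ_iff.1 (hK.lt_iff_lt.1 (hspec.trans_lt hn))

theorem divergence_transfer_general
    (d : ℕ) (ψ : ℕ → ℝ) (hψpos : ∀ n, 0 < ψ n) (hψanti : Antitone ψ)
    (hdiv : ¬ Summable fun n : ℕ => ψ n * plog n ^ d) :
    ∃ K : ℕ → ℕ, K 1 = 1 ∧
      (∀ i : ℕ, 1 ≤ i → 0 < K i) ∧
      (∀ i : ℕ, 1 ≤ i → K i < K (i + 1)) ∧
      (∀ i : ℕ, 2 ≤ i → Real.exp (Real.exp i) ≤ K i) ∧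
      (fun i : ℕ => (K i : ℝ)) =o[atTop] (fun i : ℕ => (K (i + 1) : ℝ)) ∧
      ∃ f : ℕ → ℕ,
        (∀ i : ℕ, 1 ≤ i → ∀ n : ℕ, K i ≤ n → n < K (i + 1) → f n = i) ∧
        (∃ C : ℝ, 0 < C ∧ ∀ n : ℕ, (f n : ℝ) ≤ C * plog (plog n)) ∧
        ¬ Summable (fun n : ℕ => ψ (4 ^ f n * n) * plog n ^ d) := by
  set g : ℕ → ℝ := fun n => ψ n * plog n ^ d
  have hg : ∀ n, 0 ≤ g n := fun n => mul_nonneg (hψpos n).le (pow_nonneg (plog_pos n).le d)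
  set c : ℕ → ℝ := fun i => ((4 ^ i : ℕ) : ℝ) * (1 + Real.log (2 * ((4 ^ i : ℕ) : ℝ))) ^ d
  have hstep : ∀ i k : ℕ, ∀ᶠ M : ℕ in atTop,
      i * k ≤ M ∧ Real.exp (Real.exp ((i : ℝ) + 1)) ≤ M ∧
      c i ≤ ∑ m ∈ Ico (4 ^ i * k) (4 ^ i * M), g m := fun i k =>
    (eventually_ge_atTop (i * k)).and <|
      (tendsto_natCast_atTop_atTop.eventually_ge_atTop _).and <|
        ((tendsto_sum_Ico_atTop_of_not_summable hg hdiv _).comp <| tendsto_atTop_mono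
          (fun M => Nat.le_mul_of_pos_left M (by positivity)) tendsto_id).eventually_ge_atTop _
  obtain ⟨K, hKmono, hK0, hK1, hK⟩ := exists_strictMono_forall_eventually _ hstep
  have hKexp : ∀ i : ℕ, 2 ≤ i → Real.exp (Real.exp i) ≤ K i := fun i hi => by
    obtain ⟨j, rfl⟩ : ∃ j, i = j + 1 := ⟨i - 1, by omega⟩
    exact_mod_cast (hK j (by omega)).2.1
  set f : ℕ → ℕ := fun n => Nat.findGreatest (fun j => K j ≤ n) n
  have hf : ∀ i n, K i ≤ n → n < K (i + 1) → f n = i := fun i n =>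
    Nat.findGreatest_eq_of_le_of_lt hKmono
  have hblock : ∀ i, 1 ≤ i → 1 ≤ ∑ n ∈ Ico (K i) (K (i + 1)), ψ (4 ^ f n * n) * plog n ^ d := by
    intro i hi
    refine (one_le_sum_Ico_of_le_sum_Ico_mul d (fun n => (hψpos n).le) hψanti
      (Nat.one_le_pow _ _ (by norm_num)) (hK1 ▸ hKmono.monotone hi) (hKmono i.lt_succ_self).le
      (hK i hi).2.2).trans_eq (sum_congr rfl fun n hn => ?_)
    rw [hf i n (mem_Ico.1 hn).1 (mem_Ico.1 hn).2]
  refine ⟨K, hK1, fun i hi => hK0 ▸ hKmono (by omega), fun i _ => hKmono i.lt_succ_self, hKexp,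
    isLittleO_of_natCast_mul_le (fun i => Nat.cast_nonneg _) ?_, f, fun i _ => hf i,
    ⟨1, one_pos, fun n => ?_⟩,
    not_summable_of_one_le_sum_Ico (fun n => mul_nonneg (hψpos _).le (pow_nonneg (plog_pos n).le d))
      hKmono.monotone hblock⟩
  · filter_upwards [eventually_ge_atTop 1] with i hi
    exact_mod_cast (hK i hi).1
  · simpa only [one_mul] using findGreatest_le_plog_plog hK0 hKexp n

/-- Let `d ∈ ℕ` and `ψ : ℕ → ℝ_{>0}` be non-increasing with
`∑ ψ(n) (log n)^d = ∞`. Then there is a strictly increasing sequence `(K_i)_{i≥1}`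
of positive integers with `K₁ = 1`, `K_i ≥ exp (exp i)` for `i ≥ 2`, and
`K_i = o(K_{i+1})`, such that the function `f` with `f(n) = i` for
`K_i ≤ n < K_{i+1}` satisfies `f(n) ≪ log log n` and
`∑ ψ(4^{f(n)} n) (log n)^d = ∞`. -/
theorem divergence_transfer
    (d : ℕ) (hd : 0 < d) (ψ : ℕ → ℝ) (hψpos : ∀ n, 0 < ψ n) (hψanti : Antitone ψ)
    (hdiv : ¬ Summable fun n : ℕ => ψ n * plog n ^ d) :
    ∃ K : ℕ → ℕ, K 1 = 1 ∧
      (∀ i : ℕ, 1 ≤ i → 0 < K i) ∧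
      (∀ i : ℕ, 1 ≤ i → K i < K (i + 1)) ∧
      (∀ i : ℕ, 2 ≤ i → Real.exp (Real.exp i) ≤ K i) ∧
      (fun i : ℕ => (K i : ℝ)) =o[atTop] (fun i : ℕ => (K (i + 1) : ℝ)) ∧
      ∃ f : ℕ → ℕ,
        (∀ i : ℕ, 1 ≤ i → ∀ n : ℕ, K i ≤ n → n < K (i + 1) → f n = i) ∧
        (∃ C : ℝ, 0 < C ∧ ∀ n : ℕ, (f n : ℝ) ≤ C * plog (plog n)) ∧
        ¬ Summable (fun n : ℕ => ψ (4 ^ f n * n) * plog n ^ d) :=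
  divergence_transfer_general d ψ hψpos hψanti hdiv
end

section
/- Let k ∈ ℕ, let b, A₁,…,A_k, N₁,…,N_k be positive integers with gcd(A₁,…,A_k) = 1, let P = {b + A₁n₁ + ⋯ + A_kn_k : n_i ∈ ℤ, |n_i| ≤ N_i for all i} be the associated generalised arithmetic progression, and let d ∈ ℕ. Then #{n ∈ P : d ∣ n} ≪_k N₁⋯N_k (1/d + 1/min_{1≤i≤k} N_i), where the implied constant depends only on k. -/
/-!
Count the points `n` of the box `∏ᵢ [-Nᵢ, Nᵢ]` with `d ∣ b + ∑ Aᵢ nᵢ` by induction on `k`, the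
invariant being `gcd(A₁, …, A_k, d) = 1`. Slice along the first coordinate and put
`g = gcd(d, A₁)`: a slice is empty unless its tail satisfies `g ∣ b + ∑_{i ≥ 2} Aᵢ nᵢ`, and
otherwise its solutions `n₁` form one residue class mod `d / g`, so it has at most
`(2N₁ + 1) g / d + 1` points. Since `gcd(A₂, …, A_k, g) = 1`, induction counts the admissible
tails, and altogether the count is at most `∏ (2Nᵢ + 1) · (1/d + 2^k ∑ 1/(2Nᵢ + 1))`. Finally
`2Nᵢ + 1 ≤ 3Nᵢ` and `Nᵢ ≥ min N`.
-/

open Finset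

theorem Int.card_filter_modEq_Ico_le {a b : ℤ} (hab : a ≤ b) (v : ℤ) {q : ℤ} (hq : 0 < q) :
    (#{x ∈ Ico a b | x ≡ v [ZMOD q]} : ℝ) ≤ (b - a) / q + 1 := by
  have hq' : (0 : ℚ) < q := by exact_mod_cast hq
  have hceil_lt := Int.ceil_lt_add_one ((b - v) / (q : ℚ))
  have hle_ceil := Int.le_ceil ((a - v) / (q : ℚ))
  have hlen : ((b : ℚ) - v) / q - (a - v) / q = (b - a) / q := by ring
  have hlen_nonneg : (0 : ℚ) ≤ (b - a) / q :=
    div_nonneg (by exact_mod_cast sub_nonneg.2 hab) hq'.le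
  have key : (#{x ∈ Ico a b | x ≡ v [ZMOD q]} : ℚ) ≤ (b - a) / q + 1 := by
    rw [← Int.cast_natCast, Int.Ico_filter_modEq_card a b hq v]
    push_cast
    exact max_le (by linarith) (by linarith)
  exact_mod_cast key

theorem Int.modEq_div_gcd_of_dvd_add_mul {m c A x y : ℤ} (hm : 0 < m) (hx : m ∣ c + A * x)
    (hy : m ∣ c + A * y) : x ≡ y [ZMOD m / Int.gcd m A] :=
  Int.ModEq.cancel_left_div_gcd hm <| Int.modEq_iff_dvd.2 <| by
    simpa only [add_sub_add_left_eq_sub] using dvd_sub hy hx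

theorem Int.card_filter_dvd_add_mul_Icc_le (N : ℕ) (c A : ℤ) {m : ℤ} (hm : 0 < m) :
    (#{x ∈ Icc (-(N : ℤ)) N | m ∣ c + A * x} : ℝ) ≤
      if (Int.gcd m A : ℤ) ∣ c then ((2 * N + 1) * Int.gcd m A / m + 1 : ℝ) else 0 := by
  set g := Int.gcd m A
  have hgm : (g : ℤ) ∣ m := Int.gcd_dvd_left ..
  split_ifs with hgc
  swap
  · rw [Nat.cast_nonpos, card_eq_zero, filter_eq_empty_iff]
    intro x _ hx
    have hgA : (g : ℤ) ∣ A * x := dvd_mul_of_dvd_left (Int.gcd_dvd_right m A)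
    exact hgc ((dvd_add_left hgA).1 (hgm.trans hx))
  rcases eq_empty_or_nonempty {x ∈ Icc (-(N : ℤ)) N | m ∣ c + A * x} with hempty | ⟨x₀, hx₀⟩
  · rw [hempty, card_empty, Nat.cast_zero]
    positivity
  have hg : 0 < g := Int.gcd_pos_of_ne_zero_left A hm.ne'
  have hsub : {x ∈ Icc (-(N : ℤ)) N | m ∣ c + A * x} ⊆
      {x ∈ Ico (-(N : ℤ)) (N + 1) | x ≡ x₀ [ZMOD m / g]} := by
    intro x hx
    rw [mem_filter] at hx hx₀ ⊢
    rw [Ico_add_one_right_eq_Icc]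
    exact ⟨hx.1, Int.modEq_div_gcd_of_dvd_add_mul hm hx.2 hx₀.2⟩
  calc (#{x ∈ Icc (-(N : ℤ)) N | m ∣ c + A * x} : ℝ)
      ≤ #{x ∈ Ico (-(N : ℤ)) (N + 1) | x ≡ x₀ [ZMOD m / g]} := by
        exact_mod_cast card_le_card hsub
    _ ≤ (((N + 1 : ℤ) : ℝ) - ((-N : ℤ) : ℝ)) / ((m / g : ℤ) : ℝ) + 1 :=
        Int.card_filter_modEq_Ico_le (by omega : -(N : ℤ) ≤ N + 1) x₀
          (Int.ediv_pos_of_pos_of_dvd hm (by positivity) hgm)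
    _ = (2 * N + 1) * g / m + 1 := by
        rw [Int.cast_div hgm (by positivity)]
        push_cast
        field_simp
        ring

theorem Fin.card_filter_piFinset_succ {k : ℕ} {α : Fin (k + 1) → Type*}
    (S : ∀ i, Finset (α i)) (P : (∀ i, α i) → Prop) [DecidablePred P] :
    #{n ∈ Fintype.piFinset S | P n} =
      ∑ t ∈ Fintype.piFinset (Fin.tail S), #{x ∈ S 0 | P (Fin.cons x t)} := by
  have h := filter_piFinset_eq_map_consEquiv S (fun _ => True)
  simp only [filter_true] at h
  rw [h, filter_map, card_map, card_filter, sum_product_right]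
  refine sum_congr rfl fun t _ => ?_
  rw [card_filter]
  rfl

theorem Finset.univ_gcd_fin_succ {α : Type*} [CommMonoidWithZero α] [NormalizedGCDMonoid α]
    {k : ℕ} (f : Fin (k + 1) → α) :
    univ.gcd f = GCDMonoid.gcd (f 0) (univ.gcd (Fin.tail f)) := by
  rw [Fin.univ_succ, gcd_cons, gcd_def, gcd_def, map_val, Multiset.map_map]
  rfl

theorem card_filter_dvd_add_sum_mul_cons_le {k : ℕ} (A : Fin (k + 1) → ℕ) (N₀ : ℕ) (c : ℤ)
    (t : Fin k → ℤ) {m : ℕ} (hm : 0 < m) :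
    (#{x ∈ Icc (-(N₀ : ℤ)) N₀ |
      (m : ℤ) ∣ c + ∑ i, (A i : ℤ) * (Fin.cons x t : Fin (k + 1) → ℤ) i} : ℝ) ≤
      if (Nat.gcd m (A 0) : ℤ) ∣ c + ∑ i, (Fin.tail A i : ℤ) * t i then
        ((2 * N₀ + 1) * Nat.gcd m (A 0) / m + 1 : ℝ) else 0 := by
  have hsum : ∀ x : ℤ, c + ∑ i, (A i : ℤ) * (Fin.cons x t : Fin (k + 1) → ℤ) i =
      (c + ∑ i, (Fin.tail A i : ℤ) * t i) + A 0 * x := by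
    intro x
    rw [Fin.sum_univ_succ, Fin.cons_zero]
    simp only [Fin.cons_succ, Fin.tail]
    ring
  simpa only [hsum, Int.gcd_natCast_natCast, Int.cast_natCast] using
    Int.card_filter_dvd_add_mul_Icc_le N₀ _ (A 0) (Int.natCast_pos.2 hm)

noncomputable def centeredBox {k : ℕ} (N : Fin k → ℕ) : Finset (Fin k → ℤ) :=
  Fintype.piFinset fun i => Icc (-(N i : ℤ)) (N i)

theorem box_bound_mul_slice_bound_le {a g m P S : ℝ} (k : ℕ) (ha : 1 ≤ a) (hg : 1 ≤ g)
    (hgm : g ≤ m) (hP : 0 ≤ P) (hS : 0 ≤ S) :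
    P * (1 / g + 2 ^ k * S) * (a * g / m + 1) ≤ a * P * (1 / m + 2 ^ (k + 1) * (1 / a + S)) := by
  have hm : 0 < m := by linarith
  have hg_inv : 1 / g ≤ 2 * 2 ^ k :=
    calc 1 / g ≤ 1 := div_le_one_of_le₀ hg (by linarith)
      _ ≤ 2 * 2 ^ k := by linarith [one_le_pow₀ (M₀ := ℝ) (a := 2) (n := k) (by norm_num)]
  have hslice : a * g / m + 1 ≤ 2 * a := by
    have : a * g / m ≤ a := by rw [div_le_iff₀ hm]; nlinarith
    linarith
  calc P * (1 / g + 2 ^ k * S) * (a * g / m + 1)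
      = P * (a / m + 1 / g + 2 ^ k * S * (a * g / m + 1)) := by field_simp
    _ ≤ P * (a / m + 2 * 2 ^ k + 2 ^ k * S * (2 * a)) := by gcongr
    _ = a * P * (1 / m + 2 ^ (k + 1) * (1 / a + S)) := by field_simp; ring

theorem card_centeredBox_filter_dvd_le {k : ℕ} (A N : Fin k → ℕ) (c : ℤ) {m : ℕ} (hm : 0 < m)
    (hcop : Nat.Coprime (univ.gcd A) m) :
    (#{n ∈ centeredBox N | (m : ℤ) ∣ c + ∑ i, (A i : ℤ) * n i} : ℝ) ≤
      (∏ i, (2 * N i + 1 : ℝ)) * (1 / m + 2 ^ k * ∑ i, 1 / (2 * N i + 1 : ℝ)) := by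
  induction k generalizing c m with
  | zero =>
    obtain rfl : m = 1 := by simpa using hcop
    have : #{n ∈ centeredBox N | ((1 : ℕ) : ℤ) ∣ c + ∑ i, (A i : ℤ) * n i} ≤ 1 :=
      (card_filter_le _ _).trans (by simp [centeredBox])
    simpa using this
  | succ k ih =>
    set g := Nat.gcd m (A 0)
    have hg : 0 < g := Nat.gcd_pos_of_pos_left _ hm
    have hgm : g ∣ m := Nat.gcd_dvd_left ..
    have hcop' : Nat.Coprime (univ.gcd (Fin.tail A)) g :=
      calc Nat.gcd (univ.gcd (Fin.tail A)) (Nat.gcd m (A 0))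
          = Nat.gcd (Nat.gcd (A 0) (univ.gcd (Fin.tail A))) m := by ac_rfl
        _ = 1 := by rw [univ_gcd_fin_succ] at hcop; exact hcop
    set B : ℝ := (2 * N 0 + 1) * g / m + 1
    calc (#{n ∈ centeredBox N | (m : ℤ) ∣ c + ∑ i, (A i : ℤ) * n i} : ℝ)
        = ∑ t ∈ centeredBox (Fin.tail N), (#{x ∈ Icc (-(N 0 : ℤ)) (N 0) |
            (m : ℤ) ∣ c + ∑ i, (A i : ℤ) * (Fin.cons x t : Fin (k + 1) → ℤ) i} : ℝ) := by
          rw [centeredBox, Fin.card_filter_piFinset_succ, Nat.cast_sum]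
          rfl
      _ ≤ ∑ t ∈ centeredBox (Fin.tail N),
            if (g : ℤ) ∣ c + ∑ i, (Fin.tail A i : ℤ) * t i then B else 0 :=
          sum_le_sum fun t _ => card_filter_dvd_add_sum_mul_cons_le A (N 0) c t hm
      _ = #{t ∈ centeredBox (Fin.tail N) | (g : ℤ) ∣ c + ∑ i, (Fin.tail A i : ℤ) * t i} * B := by
          rw [sum_ite, sum_const_zero, add_zero, sum_const, nsmul_eq_mul]
      _ ≤ (∏ i : Fin k, (2 * N i.succ + 1 : ℝ)) *
            (1 / g + 2 ^ k * ∑ i : Fin k, 1 / (2 * N i.succ + 1 : ℝ)) * B := by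
          gcongr
          exact ih (Fin.tail A) (Fin.tail N) c hg hcop'
      _ ≤ _ := by
          rw [Fin.prod_univ_succ, Fin.sum_univ_succ]
          exact box_bound_mul_slice_bound_le k (by simp) (by exact_mod_cast hg)
            (by exact_mod_cast Nat.le_of_dvd hm hgm) (by positivity) (by positivity)

theorem prod_two_mul_add_one_le {ι : Type*} [Fintype ι] (N : ι → ℕ) (hN : ∀ i, 0 < N i) :
    ∏ i, (2 * N i + 1 : ℝ) ≤ 3 ^ Fintype.card ι * ∏ i, (N i : ℝ) :=
  calc ∏ i, (2 * N i + 1 : ℝ) ≤ ∏ i, (3 * N i : ℝ) := by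
        gcongr with i
        have : (1 : ℝ) ≤ N i := by exact_mod_cast hN i
        linarith
    _ = 3 ^ Fintype.card ι * ∏ i, (N i : ℝ) := by simp [prod_mul_distrib]

theorem sum_one_div_two_mul_add_one_le {ι : Type*} [Fintype ι] (N : ι → ℕ) (hN : ∀ i, 0 < N i) :
    ∑ i, 1 / (2 * N i + 1 : ℝ) ≤ Fintype.card ι / (sInf (Set.range N) : ℕ) := by
  have hle : ∀ i, 1 / (2 * N i + 1 : ℝ) ≤ 1 / (sInf (Set.range N) : ℕ) := fun i => by
    obtain ⟨j, hj⟩ : sInf (Set.range N) ∈ Set.range N := Nat.sInf_mem ⟨N i, i, rfl⟩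
    have hpos : (0 : ℝ) < (sInf (Set.range N) : ℕ) := by rw [← hj]; exact_mod_cast hN j
    have hmin : ((sInf (Set.range N) : ℕ) : ℝ) ≤ N i := by
      exact_mod_cast Nat.sInf_le (Set.mem_range_self i)
    gcongr
    linarith
  calc ∑ i, 1 / (2 * N i + 1 : ℝ) ≤ Fintype.card ι • (1 / ((sInf (Set.range N) : ℕ) : ℝ)) :=
        sum_le_card_nsmul _ _ _ fun i _ => hle i
    _ = Fintype.card ι / (sInf (Set.range N) : ℕ) := by rw [nsmul_eq_mul, mul_one_div]

theorem natCard_gap_dvd_le_card_centeredBox {k : ℕ} (b : ℤ) (A N : Fin k → ℕ) (d : ℤ) :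
    Nat.card {x : ℤ // (∃ n : Fin k → ℤ, (∀ i, |n i| ≤ (N i : ℤ)) ∧
        x = b + ∑ i, (A i : ℤ) * n i) ∧ d ∣ x} ≤
      #{n ∈ centeredBox N | d ∣ b + ∑ i, (A i : ℤ) * n i} := by
  set S := {n ∈ centeredBox N | d ∣ b + ∑ i, (A i : ℤ) * n i}
  have hset : {x : ℤ | (∃ n : Fin k → ℤ, (∀ i, |n i| ≤ (N i : ℤ)) ∧
      x = b + ∑ i, (A i : ℤ) * n i) ∧ d ∣ x} =
      ↑(S.image fun n => b + ∑ i, (A i : ℤ) * n i) := by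
    ext x
    simp only [S, centeredBox, coe_image, Set.mem_image, mem_coe, mem_filter,
      Fintype.mem_piFinset, mem_Icc, ← abs_le]
    aesop
  calc _ = Nat.card ↑(S.image fun n => b + ∑ i, (A i : ℤ) * n i) :=
        congrArg (fun s : Set ℤ => Nat.card s) hset
    _ = #(S.image fun n => b + ∑ i, (A i : ℤ) * n i) := Nat.card_eq_finsetCard _
    _ ≤ #S := card_image_le

theorem gap_divisibility_count_general
    (k : ℕ) :
    ∃ Ck : ℝ, 0 < Ck ∧
      ∀ (b : ℕ) (A N : Fin k → ℕ) (d : ℕ),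
        0 < b → (∀ i, 0 < A i) → (∀ i, 0 < N i) → 0 < d →
        Finset.univ.gcd A = 1 →
        (Nat.card {x : ℤ //
            (∃ n : Fin k → ℤ, (∀ i, |n i| ≤ (N i : ℤ)) ∧
              x = (b : ℤ) + ∑ i, (A i : ℤ) * n i) ∧ (d : ℤ) ∣ x} : ℝ)
          ≤ Ck * (∏ i, (N i : ℝ)) * (1 / (d : ℝ) + 1 / ((sInf (Set.range N) : ℕ) : ℝ)) := by
  refine ⟨(k + 1) * 6 ^ k, by positivity, fun b A N d _ _ hN hd hgcd => ?_⟩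
  have hprod := prod_two_mul_add_one_le N hN
  have hsum := sum_one_div_two_mul_add_one_le N hN
  rw [Fintype.card_fin] at hprod hsum
  have h3 : (3 : ℝ) ^ k ≤ (k + 1) * 6 ^ k :=
    calc (3 : ℝ) ^ k ≤ 6 ^ k := by gcongr; norm_num
      _ ≤ (k + 1) * 6 ^ k := le_mul_of_one_le_left (by positivity) (by simp)
  have h6 : (3 : ℝ) ^ k * 2 ^ k * k ≤ (k + 1) * 6 ^ k := by
    rw [← mul_pow]
    norm_num
    nlinarith [pow_pos (by norm_num : (0 : ℝ) < 6) k]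
  calc (Nat.card _ : ℝ)
      ≤ #{n ∈ centeredBox N | (d : ℤ) ∣ b + ∑ i, (A i : ℤ) * n i} := by
        exact_mod_cast natCard_gap_dvd_le_card_centeredBox b A N d
    _ ≤ (∏ i, (2 * N i + 1 : ℝ)) * (1 / d + 2 ^ k * ∑ i, 1 / (2 * N i + 1 : ℝ)) :=
        card_centeredBox_filter_dvd_le A N b hd (by simp [hgcd])
    _ ≤ 3 ^ k * (∏ i, (N i : ℝ)) * (1 / d + 2 ^ k * (k / (sInf (Set.range N) : ℕ))) := by
        gcongr
    _ = (∏ i, (N i : ℝ)) *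
          (3 ^ k * (1 / d) + 3 ^ k * 2 ^ k * k * (1 / (sInf (Set.range N) : ℕ))) := by ring
    _ ≤ (∏ i, (N i : ℝ)) *
          ((k + 1) * 6 ^ k * (1 / d) + (k + 1) * 6 ^ k * (1 / (sInf (Set.range N) : ℕ))) := by
        gcongr
    _ = (k + 1) * 6 ^ k * (∏ i, (N i : ℝ)) * (1 / d + 1 / (sInf (Set.range N) : ℕ)) := by ring

/-- Counting multiples of `d` in a generalised arithmetic progression
`P = {b + A₁n₁ + ⋯ + A_kn_k : |n_i| ≤ N_i}` with `gcd(A₁,…,A_k) = 1`: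
`#{n ∈ P : d ∣ n} ≪_k N₁⋯N_k (1/d + 1/min_i N_i)`. -/
theorem gap_divisibility_count
    (k : ℕ) (hk : 0 < k) :
    ∃ Ck : ℝ, 0 < Ck ∧
      ∀ (b : ℕ) (A N : Fin k → ℕ) (d : ℕ),
        0 < b → (∀ i, 0 < A i) → (∀ i, 0 < N i) → 0 < d →
        Finset.univ.gcd A = 1 →
        (Nat.card {x : ℤ //
            (∃ n : Fin k → ℤ, (∀ i, |n i| ≤ (N i : ℤ)) ∧
              x = (b : ℤ) + ∑ i, (A i : ℤ) * n i) ∧ (d : ℤ) ∣ x} : ℝ)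
          ≤ Ck * (∏ i, (N i : ℝ)) * (1 / (d : ℝ) + 1 / ((sInf (Set.range N) : ℕ) : ℝ)) :=
  gap_divisibility_count_general k
end

section
/- Let k ∈ ℕ, let b, A₁,…,A_k, N₁,…,N_k be positive integers with gcd(A₁,…,A_k) = 1, and let P = {b + A₁n₁ + ⋯ + A_kn_k : n_i ∈ ℤ, 1 ≤ n_i ≤ N_i for all i} be a proper asymmetric generalised arithmetic progression. Then for every d ∈ ℕ one has #{n ∈ P : d ∣ n}/(N₁⋯N_k) = 1/d + O_k(1/min_{1≤i≤k} N_i), where the implied constant depends only on k. -/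
/-!
By properness, the multiples of `d` in `P` correspond to the lattice points `n` of the box
`∏ [1, N_i]` with `d ∣ b + ∑ A_i n_i`. Fix all coordinates but the first, so that the
condition reads `m ∣ A₁ n₁ + c`. With `g = gcd(m, A₁)` it has no solution unless `g ∣ c`,
and otherwise it cuts out a residue class modulo `m / g`, which meets `[1, N₁]` in
`N₁ g / m + O(1)` points. Summing over the other coordinates leaves the points of a box of
dimension `k - 1` with `g ∣ c`. Since `gcd(A₂, …, A_k, g) = 1`, induction gives the density
`1 / g` for these up to `∑_{i ≥ 2} 1 / N_i`. The total error is `∑ 1 / N_i ≤ k / min N_i`.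
-/

open Finset

namespace Int

lemma abs_card_Ioc_filter_modEq_sub_le {a b r : ℤ} (hr : 0 < r) (hab : a ≤ b) (v : ℤ) :
    |(#{x ∈ Ioc a b | x ≡ v [ZMOD r]} : ℝ) - (b - a) / r| ≤ 1 := by
  set u : ℚ := (b - v) / r
  set w : ℚ := (a - v) / r
  have huw : u - w = (b - a) / r := by ring
  have hwu : w ≤ u := sub_nonneg.1 <| huw ▸
    div_nonneg (by exact_mod_cast sub_nonneg.2 hab) (by exact_mod_cast hr.le)
  have hcard : (#{x ∈ Ioc a b | x ≡ v [ZMOD r]} : ℚ) = ⌊u⌋ - ⌊w⌋ := by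
    have h := Ioc_filter_modEq_card a b hr v
    rw [max_eq_left (sub_nonneg.2 (floor_le_floor hwu))] at h
    exact_mod_cast h
  have hq : |(#{x ∈ Ioc a b | x ≡ v [ZMOD r]} : ℚ) - (u - w)| ≤ 1 := by
    rw [hcard, abs_le]
    constructor <;> linarith [floor_le u, lt_floor_add_one u, floor_le w, lt_floor_add_one w]
  rw [huw] at hq
  exact_mod_cast hq

lemma mul_modEq_mul_left_iff {m : ℤ} (hm : 0 < m) (a x y : ℤ) :
    a * x ≡ a * y [ZMOD m] ↔ x ≡ y [ZMOD m / gcd m a] := by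
  refine ⟨ModEq.cancel_left_div_gcd hm, fun h => ?_⟩
  rw [modEq_iff_dvd] at h ⊢
  rw [← mul_sub, ← Int.mul_ediv_cancel' (gcd_dvd_left m a)]
  exact mul_dvd_mul (gcd_dvd_right m a) h

lemma exists_mul_modEq_of_gcd_dvd {m a c : ℤ} (h : (gcd m a : ℤ) ∣ c) :
    ∃ r, a * r ≡ c [ZMOD m] := by
  obtain ⟨t, rfl⟩ := h
  refine ⟨gcdB m a * t, (modEq_iff_dvd.2 ⟨-(gcdA m a * t), ?_⟩).symm⟩
  rw [gcd_eq_gcd_ab]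
  ring

lemma abs_card_Icc_filter_dvd_mul_add_sub_le {m : ℤ} (hm : 0 < m) (a c : ℤ) (N : ℕ) :
    |(#{x ∈ Icc 1 (N : ℤ) | m ∣ a * x + c} : ℝ) -
      if (gcd m a : ℤ) ∣ c then (N * gcd m a / m : ℝ) else 0| ≤ 1 := by
  have hg_dvd_m := gcd_dvd_left m a
  have hg_dvd_a := gcd_dvd_right m a
  by_cases hc : (gcd m a : ℤ) ∣ c
  · obtain ⟨r, hr⟩ := exists_mul_modEq_of_gcd_dvd (dvd_neg.2 hc)
    have hiff : ∀ x, m ∣ a * x + c ↔ x ≡ r [ZMOD m / gcd m a] := fun x => by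
      rw [← mul_modEq_mul_left_iff hm, show a * x + c = -(-c - a * x) by ring, dvd_neg,
        ← modEq_iff_dvd]
      exact ⟨fun h => h.trans hr.symm, fun h => h.trans hr⟩
    have hIcc : Icc 1 (N : ℤ) = Ioc 0 (N : ℤ) := by
      ext
      simp only [mem_Icc, mem_Ioc]
      omega
    have hg : (0 : ℝ) < gcd m a := by exact_mod_cast gcd_pos_of_ne_zero_left a hm.ne'
    have hq : 0 < m / gcd m a := ediv_pos_of_pos_of_dvd hm (by positivity) hg_dvd_m
    have := abs_card_Ioc_filter_modEq_sub_le hq (Nat.cast_nonneg N) r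
    rw [if_pos hc, filter_congr fun x _ => hiff x, hIcc]
    convert this using 3
    rw [cast_div hg_dvd_m hg.ne']
    push_cast [sub_zero]
    field_simp
  · have hempty : {x ∈ Icc 1 (N : ℤ) | m ∣ a * x + c} = ∅ :=
      filter_false_of_mem fun x _ h =>
        hc <| (dvd_add_right (hg_dvd_a.mul_right x)).1 (hg_dvd_m.trans h)
    simp [hempty, hc]

end Int

lemma Pi.mem_Icc_iff_forall {ι α : Type*} [Fintype ι] [DecidableEq ι] [PartialOrder α]
    [LocallyFiniteOrder α] [DecidableEq α] {a b x : ι → α} :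
    x ∈ Icc a b ↔ ∀ i, a i ≤ x i ∧ x i ≤ b i := by
  simp [Pi.le_def, forall_and]

lemma card_filter_Icc_succ {α : Type*} [PartialOrder α] [LocallyFiniteOrder α] [DecidableEq α]
    {k : ℕ} (a b : Fin (k + 1) → α) (p : (Fin (k + 1) → α) → Prop) [DecidablePred p] :
    #{n ∈ Icc a b | p n} =
      ∑ y ∈ Icc (Fin.tail a) (Fin.tail b), #{x ∈ Icc (a 0) (b 0) | p (Fin.cons x y)} := by
  have hIcc : Icc a b = (Icc (a 0) (b 0) ×ˢ Icc (Fin.tail a) (Fin.tail b)).map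
      (Fin.consEquiv _).toEmbedding := by
    have h := filter_piFinset_eq_map_consEquiv (fun i => Icc (a i) (b i)) (fun _ => True)
    simp only [filter_true] at h
    exact h
  simp_rw [card_filter]
  rw [hIcc, sum_map, sum_product_right]
  rfl

lemma Nat.Coprime.gcd_tail {k : ℕ} {A : Fin (k + 1) → ℕ} {m : ℕ}
    (h : Nat.Coprime (univ.gcd A) m) :
    Nat.Coprime (univ.gcd (Fin.tail A)) (Nat.gcd m (A 0)) := by
  have hA : Nat.gcd (univ.gcd (Fin.tail A)) (Nat.gcd m (A 0)) ∣ univ.gcd A :=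
    Finset.dvd_gcd fun i _ => by
      cases i using Fin.cases with
      | zero => exact (Nat.gcd_dvd_right _ _).trans (Nat.gcd_dvd_right _ _)
      | succ j => exact (Nat.gcd_dvd_left _ _).trans (Finset.gcd_dvd (mem_univ j))
  have hm : Nat.gcd (univ.gcd (Fin.tail A)) (Nat.gcd m (A 0)) ∣ m :=
    (Nat.gcd_dvd_right _ _).trans (Nat.gcd_dvd_left _ _)
  simpa [Nat.Coprime, h.gcd_eq_one] using Nat.dvd_gcd hA hm

lemma abs_card_filter_Icc_succ_dvd_sub_le {k : ℕ} (b : ℤ) (A N : Fin (k + 1) → ℕ) {m : ℕ}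
    (hm : 0 < m) :
    |(#{n ∈ Icc 1 (fun i => (N i : ℤ)) | (m : ℤ) ∣ b + ∑ i, (A i : ℤ) * n i} : ℝ) -
        #{y ∈ Icc 1 (fun i : Fin k => (N i.succ : ℤ)) |
            (Nat.gcd m (A 0) : ℤ) ∣ b + ∑ i, (A i.succ : ℤ) * y i} *
          (N 0 * Nat.gcd m (A 0) / m : ℝ)| ≤
      ∏ i : Fin k, (N i.succ : ℝ) := by
  set g := Nat.gcd m (A 0)
  set s : (Fin k → ℤ) → ℤ := fun y => b + ∑ i, (A i.succ : ℤ) * y i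
  set Q := Icc (1 : Fin k → ℤ) fun i => (N i.succ : ℤ)
  have hcount : #{n ∈ Icc 1 (fun i => (N i : ℤ)) | (m : ℤ) ∣ b + ∑ i, (A i : ℤ) * n i} =
      ∑ y ∈ Q, #{x ∈ Icc 1 (N 0 : ℤ) | (m : ℤ) ∣ A 0 * x + s y} := by
    rw [card_filter_Icc_succ]
    refine sum_congr rfl fun y _ => ?_
    simp only [Fin.sum_univ_succ, Fin.cons_zero, Fin.cons_succ, s, add_left_comm]
    rfl
  have hfiber (y) : |(#{x ∈ Icc 1 (N 0 : ℤ) | (m : ℤ) ∣ A 0 * x + s y} : ℝ) -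
      if (g : ℤ) ∣ s y then (N 0 * g / m : ℝ) else 0| ≤ 1 := by
    simpa [g, Int.gcd_natCast_natCast] using
      Int.abs_card_Icc_filter_dvd_mul_add_sub_le (Int.natCast_pos.2 hm) (A 0) (s y) (N 0)
  have hmain : ∑ y ∈ Q, (if (g : ℤ) ∣ s y then (N 0 * g / m : ℝ) else 0) =
      #{y ∈ Q | (g : ℤ) ∣ s y} * (N 0 * g / m) := by
    rw [← sum_filter, sum_const, nsmul_eq_mul]
  have hQ : (#Q : ℝ) = ∏ i : Fin k, (N i.succ : ℝ) := by simp [Q, Pi.card_Icc]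
  rw [hcount, ← hQ, ← hmain, Nat.cast_sum, ← sum_sub_distrib]
  exact (abs_sum_le_sum_abs _ _).trans <| by
    simpa using sum_le_card_nsmul Q _ 1 fun y _ => hfiber y

theorem abs_card_filter_Icc_dvd_div_prod_sub_le :
    ∀ {k : ℕ} (b : ℤ) (A N : Fin k → ℕ) {m : ℕ},
      (∀ i, 0 < N i) → 0 < m → Nat.Coprime (univ.gcd A) m →
    |(#{n ∈ Icc 1 (fun i => (N i : ℤ)) | (m : ℤ) ∣ b + ∑ i, (A i : ℤ) * n i} : ℝ) /
        ∏ i, (N i : ℝ) - 1 / m| ≤ ∑ i, (N i : ℝ)⁻¹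
  | 0, b, A, N, m, _, _, hcop => by
    -- the gcd of the empty family is `0`, so coprimality forces `m = 1`
    obtain rfl : m = 1 := by simpa using hcop
    simp [Pi.card_Icc]
  | k + 1, b, A, N, m, hN, hm, hcop => by
    set g := Nat.gcd m (A 0)
    set X :=
      (#{n ∈ Icc 1 (fun i => (N i : ℤ)) | (m : ℤ) ∣ b + ∑ i, (A i : ℤ) * n i} : ℝ)
    set R := (#{y ∈ Icc 1 (fun i : Fin k => (N i.succ : ℤ)) |
      (g : ℤ) ∣ b + ∑ i, (A i.succ : ℤ) * y i} : ℝ)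
    set P := ∏ i : Fin k, (N i.succ : ℝ)
    have hX : |X - R * (N 0 * g / m)| ≤ P := abs_card_filter_Icc_succ_dvd_sub_le b A N hm
    have hR : |R / P - 1 / g| ≤ ∑ i : Fin k, (N i.succ : ℝ)⁻¹ :=
      abs_card_filter_Icc_dvd_div_prod_sub_le b (Fin.tail A) (Fin.tail N)
        (fun i => hN i.succ) (Nat.gcd_pos_of_pos_left _ hm) hcop.gcd_tail
    have hN0 : (0 : ℝ) < N 0 := by exact_mod_cast hN 0
    have hP : 0 < P := prod_pos fun i _ => by exact_mod_cast hN i.succ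
    have hg : (0 : ℝ) < g := by exact_mod_cast Nat.gcd_pos_of_pos_left _ hm
    have hgm : (g : ℝ) / m ≤ 1 :=
      div_le_one_of_le₀ (by exact_mod_cast Nat.gcd_le_left _ hm) (Nat.cast_nonneg m)
    have hsplit : X / (N 0 * P) - 1 / m =
        (X - R * (N 0 * g / m)) / (N 0 * P) + g / m * (R / P - 1 / g) := by
      field_simp
      ring
    rw [Fin.prod_univ_succ, Fin.sum_univ_succ, hsplit]
    refine (abs_add_le _ _).trans (add_le_add ?_ ?_)
    · rw [abs_div, abs_of_pos (mul_pos hN0 hP), div_le_iff₀ (mul_pos hN0 hP),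
        inv_mul_cancel_left₀ hN0.ne']
      exact hX
    · rw [abs_mul, abs_of_nonneg (by positivity)]
      exact (mul_le_of_le_one_left (abs_nonneg _) hgm).trans hR

lemma Nat.card_exists_mem_eq_and {α β : Type*} [DecidableEq β] {s : Finset α} {f : α → β}
    (hf : Set.InjOn f s) (p : β → Prop) [DecidablePred p] :
    Nat.card {x // (∃ a ∈ s, x = f a) ∧ p x} = #{a ∈ s | p (f a)} := by
  rw [← Finset.card_image_of_injOn (hf.mono (filter_subset _ s)),
    ← Nat.card_eq_finsetCard (image f _)]
  refine Nat.card_congr (Equiv.subtypeEquivRight fun x => ?_)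
  simp only [mem_image, mem_filter]
  constructor
  · rintro ⟨⟨a, ha, rfl⟩, hp⟩
    exact ⟨a, ⟨ha, hp⟩, rfl⟩
  · rintro ⟨a, ⟨ha, hp⟩, rfl⟩
    exact ⟨⟨a, ha, rfl⟩, hp⟩

lemma sum_inv_le_card_div_sInf {ι : Type*} [Fintype ι] [Nonempty ι] {N : ι → ℕ}
    (hN : ∀ i, 0 < N i) :
    ∑ i, (N i : ℝ)⁻¹ ≤ Fintype.card ι / (sInf (Set.range N) : ℕ) := by
  obtain ⟨i₀, hi₀⟩ : sInf (Set.range N) ∈ Set.range N :=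
    Nat.sInf_mem (Set.range_nonempty N)
  have hpos : (0 : ℝ) < (sInf (Set.range N) : ℕ) := by rw [← hi₀]; exact_mod_cast hN i₀
  rw [div_eq_mul_inv, ← nsmul_eq_mul, ← card_univ]
  exact sum_le_card_nsmul _ _ _ fun i _ =>
    inv_anti₀ hpos (by exact_mod_cast Nat.sInf_le (Set.mem_range_self i))

/-- Counting multiples of `d` in a proper asymmetric generalised arithmetic
progression `P⁺ = {b + A₁n₁ + ⋯ + A_kn_k : 1 ≤ n_i ≤ N_i}` with
`gcd(A₁,…,A_k) = 1`:
`#{n ∈ P⁺ : d ∣ n}/(N₁⋯N_k) = 1/d + O_k(1/min_i N_i)`. -/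
theorem proper_gap_divisibility_count
    (k : ℕ) (hk : 0 < k) :
    ∃ Ck : ℝ, 0 < Ck ∧
      ∀ (b : ℕ) (A N : Fin k → ℕ) (d : ℕ),
        0 < b → (∀ i, 0 < A i) → (∀ i, 0 < N i) → 0 < d →
        Finset.univ.gcd A = 1 →
        (∀ m n : Fin k → ℤ,
          (∀ i, 1 ≤ m i ∧ m i ≤ (N i : ℤ)) → (∀ i, 1 ≤ n i ∧ n i ≤ (N i : ℤ)) →
          (b : ℤ) + ∑ i, (A i : ℤ) * m i = (b : ℤ) + ∑ i, (A i : ℤ) * n i → m = n) →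
        |(Nat.card {x : ℤ //
            (∃ n : Fin k → ℤ, (∀ i, 1 ≤ n i ∧ n i ≤ (N i : ℤ)) ∧
              x = (b : ℤ) + ∑ i, (A i : ℤ) * n i) ∧ (d : ℤ) ∣ x} : ℝ)
            / (∏ i, (N i : ℝ)) - 1 / (d : ℝ)|
          ≤ Ck / ((sInf (Set.range N) : ℕ) : ℝ) := by
  refine ⟨k, Nat.cast_pos.2 hk, fun b A N d _ _ hN hd hgcd hproper => ?_⟩
  have : Nonempty (Fin k) := ⟨⟨0, hk⟩⟩
  simp only [← Pi.mem_Icc_iff_forall] at hproper ⊢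
  rw [Nat.card_exists_mem_eq_and fun m hm n hn => hproper m n hm hn]
  calc _ ≤ ∑ i, (N i : ℝ)⁻¹ :=
        abs_card_filter_Icc_dvd_div_prod_sub_le b A N hN hd (by simp [hgcd])
    _ ≤ _ := by simpa using sum_inv_le_card_div_sInf hN
end

section
/- Let k ≥ 2, let n ∈ ℕ, let γ₁,…,γ_k ∈ (−1, 0], and let ψ(n) be a real number with n^{−2} ≤ ψ(n). Then the k-dimensional Lebesgue measure of the set A_n = {(α₁,…,α_k) ∈ [0,1]^k : ‖nα₁ − γ₁‖ ⋯ ‖nα_k − γ_k‖ < ψ(n)} satisfies μ_k(A_n) ≪_k ψ(n)(log n)^{k−1}, with the implied constant depending only on k. -/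
open MeasureTheory

/-!
Slice off one coordinate and induct on the dimension. In one dimension the set
`{x ∈ [0,1] : ‖nx - γ‖ < ε}` is covered by `n + 1` intervals of length `2ε/n`, so its measure is
at most `4ε`. With `m + 1` factors, fixing the first coordinate `x₀` leaves `m` factors with
product below `ψ / ‖nx₀ - γ₀‖`; by induction this slice has measure at most
`min 1 (a / ‖nx₀ - γ₀‖)` with `a = 4ψ(1 + 4N)^(m-1)`. On each dyadic level
`‖nx₀ - γ₀‖ < 2⁻ᵗ`, `t < N`, the one-dimensional bound makes the contribution at most `4a`, so
integrating over `x₀` gives `a(1 + 4N)` as soon as `2ᴺ ≥ 1/(4ψ)`; since `ψ ≥ n⁻²`,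
`N = 2 log₂ n` suffices.
-/

open Set ENNReal

lemma nint_nonneg (x : ℝ) : 0 ≤ nint x := abs_nonneg _

lemma nint_le_one (x : ℝ) : nint x ≤ 1 := (abs_sub_round x).trans (by norm_num)

@[fun_prop]
lemma measurable_nint : Measurable nint := by
  unfold nint
  simp_rw [round_eq]
  fun_prop

lemma round_mono : Monotone (round : ℝ → ℤ) := fun x y h => by
  simp only [round_eq]; exact Int.floor_mono (by linarith)

lemma volume_Icc_inter_nint_lt_le {n : ℕ} (hn : 0 < n) (γ ε : ℝ) :
    volume (Icc (0 : ℝ) 1 ∩ {x | nint (n * x - γ) < ε}) ≤ ENNReal.ofReal (4 * ε) := by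
  rcases le_or_gt ε 0 with hε | hε
  · have : Icc (0 : ℝ) 1 ∩ {x | nint (n * x - γ) < ε} = ∅ :=
      eq_empty_of_forall_notMem fun x hx => (hx.2.trans_le hε).not_ge (nint_nonneg _)
    simp [this]
  have hn' : (0 : ℝ) < n := by exact_mod_cast hn
  set m₀ := round (-γ)
  -- `round` is monotone and commutes with adding `n`, so on `[0,1]` the integer
  -- `round (n * x - γ)` is one of `m₀, …, m₀ + n`.
  have hcover : Icc (0 : ℝ) 1 ∩ {x | nint (n * x - γ) < ε} ⊆
      ⋃ m ∈ Finset.Icc m₀ (m₀ + n), Ioo ((γ + m - ε) / n) ((γ + m + ε) / n) := by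
    rintro x ⟨⟨hx0, hx1⟩, hx⟩
    have hlo : m₀ ≤ round (n * x - γ) := round_mono (by nlinarith)
    have hhi : round (n * x - γ) ≤ m₀ + n := by
      rw [← round_add_natCast]; exact round_mono (by nlinarith)
    refine mem_biUnion (Finset.mem_Icc.2 ⟨hlo, hhi⟩) ?_
    have := abs_lt.1 (show |n * x - γ - round (n * x - γ)| < ε from hx)
    constructor
    · rw [div_lt_iff₀ hn']; linarith
    · rw [lt_div_iff₀ hn']; linarith
  calc _ ≤ ∑ m ∈ Finset.Icc m₀ (m₀ + n), volume (Ioo ((γ + m - ε) / n) ((γ + m + ε) / n)) :=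
        (measure_mono hcover).trans (measure_biUnion_finset_le _ _)
    _ = (n + 1) * ENNReal.ofReal (2 * ε / n) := by
        have hlen (m : ℤ) : (γ + m + ε) / n - (γ + m - ε) / n = 2 * ε / n := by ring
        have hcard : (m₀ + n + 1 - m₀).toNat = n + 1 := by omega
        simp only [Real.volume_Ioo, hlen, Finset.sum_const, Int.card_Icc, hcard, nsmul_eq_mul]
        push_cast; rfl
    _ = ENNReal.ofReal ((n + 1) * (2 * ε / n)) := by
        rw [ENNReal.ofReal_mul (by positivity)]; norm_cast
    _ ≤ ENNReal.ofReal (4 * ε) := by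
        refine ENNReal.ofReal_le_ofReal ?_
        have : (1 : ℝ) ≤ n := by exact_mod_cast hn
        rw [mul_div_assoc', div_le_iff₀ hn']
        nlinarith

instance : IsProbabilityMeasure (volume.restrict (Icc (0 : ℝ) 1)) := ⟨by simp⟩

lemma restrict_Icc_setOf_ofReal_nint_lt_le {n : ℕ} (hn : 0 < n) (γ : ℝ) (ε : ℝ≥0∞) :
    volume.restrict (Icc (0 : ℝ) 1) {x | ENNReal.ofReal (nint (n * x - γ)) < ε} ≤ 4 * ε := by
  rcases eq_or_ne ε ∞ with rfl | hε
  · simp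
  have hset : {x | ENNReal.ofReal (nint (n * x - γ)) < ε} = {x | nint (n * x - γ) < ε.toReal} := by
    ext x
    exact ENNReal.ofReal_lt_iff_lt_toReal (nint_nonneg _) hε
  rw [Measure.restrict_apply' measurableSet_Icc, inter_comm, hset]
  calc _ ≤ ENNReal.ofReal (4 * ε.toReal) := volume_Icc_inter_nint_lt_le hn γ _
    _ = 4 * ε := by rw [ENNReal.ofReal_mul zero_le_four, ofReal_toReal hε, ENNReal.ofReal_ofNat]

lemma le_one_add_sum_two_pow_ite {u : ℝ≥0∞} {N : ℕ} (hu : u ≤ 2 ^ N) :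
    u ≤ 1 + ∑ t ∈ Finset.range N, if 2 ^ t < u then 2 ^ t else 0 := by
  induction N with
  | zero => simpa using hu
  | succ N ih =>
    rw [Finset.sum_range_succ, ← add_assoc]
    rcases le_or_gt u (2 ^ N) with h | h
    · exact (ih h).trans le_self_add
    · have hall : ∀ t ∈ Finset.range N, (if 2 ^ t < u then (2 : ℝ≥0∞) ^ t else 0) = 2 ^ t :=
        fun t ht => if_pos ((pow_le_pow_right₀ one_le_two (Finset.mem_range.1 ht).le).trans_lt h)
      have hgeom := geom_sum_mul_add (1 : ℝ≥0∞) N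
      rw [Finset.sum_congr rfl hall, if_pos h]
      norm_num at hgeom
      rw [add_comm 1, hgeom, ← two_mul, ← pow_succ']
      exact hu

section ProductSmallBall

variable {X : Type*} [MeasurableSpace X] {μ : Measure X}

lemma lintegral_min_one_mul_inv_le [IsProbabilityMeasure μ] {g : X → ℝ≥0∞} (hg : Measurable g)
    {C : ℝ≥0∞} (hC : ∀ ε, μ {x | g x < ε} ≤ C * ε) {a : ℝ≥0∞} {N : ℕ} (ha : a⁻¹ ≤ 2 ^ N) :
    ∫⁻ x, min 1 (a * (g x)⁻¹) ∂μ ≤ a * (1 + N * C) := by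
  rcases eq_or_ne a ∞ with rfl | ha_top
  · simp
  have ha0 : a ≠ 0 := by
    rintro rfl
    simp at ha
  set S : ℕ → Set X := fun t => {x | g x < (2 ^ t)⁻¹}
  have hS (t : ℕ) : MeasurableSet (S t) := measurableSet_lt hg measurable_const
  have hpt (x : X) : min 1 (a * (g x)⁻¹) ≤
      a * (1 + ∑ t ∈ Finset.range N, (S t).indicator (fun _ => 2 ^ t) x) := by
    rw [show min 1 (a * (g x)⁻¹) = a * min a⁻¹ (g x)⁻¹ by
      rw [mul_min, ENNReal.mul_inv_cancel ha0 ha_top]]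
    gcongr
    refine (le_one_add_sum_two_pow_ite ((min_le_left _ _).trans ha)).trans ?_
    refine add_le_add_right (Finset.sum_le_sum fun t _ => ?_) (1 : ℝ≥0∞)
    by_cases h : 2 ^ t < min a⁻¹ (g x)⁻¹
    · rw [if_pos h, indicator_of_mem]
      exact ENNReal.lt_inv_iff_lt_inv.1 (h.trans_le (min_le_right _ _))
    · rw [if_neg h]
      exact zero_le
  calc ∫⁻ x, min 1 (a * (g x)⁻¹) ∂μ
      ≤ ∫⁻ x, a * (1 + ∑ t ∈ Finset.range N, (S t).indicator (fun _ => 2 ^ t) x) ∂μ :=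
        lintegral_mono hpt
    _ = a * (1 + ∑ t ∈ Finset.range N, 2 ^ t * μ (S t)) := by
        rw [lintegral_const_mul _ (by measurability), lintegral_add_left measurable_const,
          lintegral_finsetSum _ fun t _ => measurable_const.indicator (hS t)]
        simp [lintegral_indicator_const (hS _)]
    _ ≤ a * (1 + ∑ t ∈ Finset.range N, C) := by
        gcongr with t
        calc 2 ^ t * μ (S t) ≤ 2 ^ t * (C * (2 ^ t)⁻¹) := by gcongr; exact hC _
          _ = C := by
            rw [mul_comm, mul_assoc, ENNReal.inv_mul_cancel (by simp) (by simp), mul_one]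
    _ = a * (1 + N * C) := by simp

lemma measure_pi_setOf_prod_lt_eq_lintegral [SigmaFinite μ] {m : ℕ}
    {g : Fin (m + 1) → X → ℝ≥0∞} (hg : ∀ i, Measurable (g i)) (ψ : ℝ≥0∞) :
    Measure.pi (fun _ => μ) {x | ∏ i, g i (x i) < ψ} =
      ∫⁻ x₀, Measure.pi (fun _ => μ) {y : Fin m → X | g 0 x₀ * ∏ j, g j.succ (y j) < ψ} ∂μ := by
  have hmeas : MeasurableSet {p : X × (Fin m → X) | g 0 p.1 * ∏ j, g j.succ (p.2 j) < ψ} :=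
    measurableSet_lt (by fun_prop) measurable_const
  calc _ = Measure.pi (fun _ => μ) (MeasurableEquiv.piFinSuccAbove (fun _ => X) 0 ⁻¹'
          {p : X × (Fin m → X) | g 0 p.1 * ∏ j, g j.succ (p.2 j) < ψ}) := by
        congr 1
        ext x
        simp [Fin.prod_univ_succ, Fin.tail]
    _ = _ := by
        rw [(measurePreserving_piFinSuccAbove (fun _ => μ) 0).measure_preimage
          hmeas.nullMeasurableSet, Measure.prod_apply hmeas]
        rfl

theorem measure_pi_setOf_prod_lt_le [IsProbabilityMeasure μ] {m : ℕ}
    {g : Fin (m + 1) → X → ℝ≥0∞} (hg : ∀ i, Measurable (g i)) (hg_le : ∀ i x, g i x ≤ 1)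
    {C : ℝ≥0∞} (hC : ∀ i ε, μ {x | g i x < ε} ≤ C * ε) {ψ : ℝ≥0∞} {N : ℕ}
    (hN : (C * ψ)⁻¹ ≤ 2 ^ N) :
    Measure.pi (fun _ => μ) {x | ∏ i, g i (x i) < ψ} ≤ C * ψ * (1 + N * C) ^ m := by
  induction m generalizing ψ with
  | zero =>
    calc _ = μ {x | g 0 x < ψ} := by
          rw [← (measurePreserving_funUnique μ (Fin 1)).measure_preimage_equiv]
          simp; rfl
      _ ≤ C * ψ * (1 + N * C) ^ 0 := by simpa using hC 0 ψ
  | succ m ih =>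
    have hψ : ψ ≠ 0 := by
      rintro rfl
      simp at hN
    rw [measure_pi_setOf_prod_lt_eq_lintegral hg]
    set a := C * ψ * (1 + N * C) ^ m
    have hslice (x₀ : X) : Measure.pi (fun _ => μ)
        {y : Fin (m + 1) → X | g 0 x₀ * ∏ j, g j.succ (y j) < ψ} ≤ min 1 (a * (g 0 x₀)⁻¹) := by
      refine le_min prob_le_one ?_
      have hg0 : g 0 x₀ ≠ ∞ := ((hg_le 0 x₀).trans_lt one_lt_top).ne
      have hψ_le : ψ ≤ ψ / g 0 x₀ := (ENNReal.le_div_iff_mul_le (Or.inr hψ) (Or.inl hg0)).2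
        (mul_le_of_le_one_right' (hg_le 0 x₀))
      calc _ ≤ Measure.pi (fun _ => μ)
            {y : Fin (m + 1) → X | ∏ j, g j.succ (y j) < ψ / g 0 x₀} := by
            refine measure_mono fun y hy => ?_
            have hP : ∏ j, g j.succ (y j) ≠ ∞ :=
              ((Finset.prod_le_one' fun j _ => hg_le _ _).trans_lt one_lt_top).ne
            rw [mem_ofPred_eq, ENNReal.lt_div_iff_mul_lt (Or.inr hP) (Or.inl hg0), mul_comm]
            exact hy
        _ ≤ C * (ψ / g 0 x₀) * (1 + N * C) ^ m :=
            ih (fun j => hg j.succ) (fun j => hg_le j.succ) (fun j => hC j.succ)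
              (hN.trans' (ENNReal.inv_le_inv.2 (by gcongr)))
        _ = a * (g 0 x₀)⁻¹ := by simp only [a, div_eq_mul_inv]; ring
    have ha : a⁻¹ ≤ 2 ^ N :=
      hN.trans' (ENNReal.inv_le_inv.2 (le_mul_of_one_le_right' (one_le_pow₀ le_self_add)))
    calc _ ≤ ∫⁻ x₀, min 1 (a * (g 0 x₀)⁻¹) ∂μ := lintegral_mono hslice
      _ ≤ a * (1 + N * C) := lintegral_min_one_mul_inv_le (hg 0) (hC 0) ha
      _ = C * ψ * (1 + N * C) ^ (m + 1) := by rw [pow_succ, ← mul_assoc]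

end ProductSmallBall

lemma pi_setOf_forall_mem_and {ι X : Type*} [Fintype ι] [MeasurableSpace X] (μ : Measure X)
    [SigmaFinite μ] {s : Set X} (hs : MeasurableSet s) (S : Set (ι → X)) :
    Measure.pi (fun _ => μ) {x | (∀ i, x i ∈ s) ∧ x ∈ S} =
      Measure.pi (fun _ => μ.restrict s) S := by
  rw [← Measure.restrict_pi_pi, Measure.restrict_apply' (MeasurableSet.univ_pi fun _ => hs)]
  congr 1
  ext x
  simp [and_comm]

lemma natLog_two_le_two_mul_plog (n : ℕ) : (Nat.log 2 n : ℝ) ≤ 2 * plog n := by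
  have hlog2 : (1 / 2 : ℝ) < Real.log 2 := by linarith [Real.log_two_gt_d9]
  have hlogn : 0 ≤ Real.log n := Real.log_natCast_nonneg n
  calc (Nat.log 2 n : ℝ) ≤ Real.logb 2 n := by exact_mod_cast Real.natLog_le_logb n 2
    _ = Real.log n / Real.log 2 := rfl
    _ ≤ 2 * Real.log n := by rw [div_le_iff₀ (by linarith)]; nlinarith
    _ ≤ 2 * plog n := by gcongr; exact le_max_left _ _

lemma inv_four_mul_ofReal_le_two_pow {n : ℕ} (hn : 0 < n) {ψ : ℝ} (hψ : ((n : ℝ) ^ 2)⁻¹ ≤ ψ) :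
    (4 * ENNReal.ofReal ψ)⁻¹ ≤ 2 ^ (2 * Nat.log 2 n) := by
  have hn' : (n : ℝ) ≤ 2 ^ (Nat.log 2 n + 1) := by
    exact_mod_cast (Nat.lt_pow_succ_log_self one_lt_two n).le
  have hψ0 : 0 < ψ := lt_of_lt_of_le (by positivity) hψ
  rw [← ENNReal.ofReal_ofNat 4, ← ENNReal.ofReal_mul zero_le_four,
    ← ENNReal.ofReal_inv_of_pos (by positivity), ← ENNReal.ofReal_ofNat 2,
    ← ENNReal.ofReal_pow zero_le_two]
  refine ENNReal.ofReal_le_ofReal ?_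
  calc (4 * ψ)⁻¹ ≤ (4 * ((n : ℝ) ^ 2)⁻¹)⁻¹ := inv_anti₀ (by positivity) (by linarith)
    _ = (n : ℝ) ^ 2 / 4 := by field_simp
    _ ≤ (2 ^ (Nat.log 2 n + 1)) ^ 2 / 4 := by gcongr
    _ = 2 ^ (2 * Nat.log 2 n) := by ring

lemma four_mul_ofReal_mul_one_add_natLog_pow_le (n m : ℕ) {ψ : ℝ} (hψ : 0 ≤ ψ) :
    4 * ENNReal.ofReal ψ * (1 + (2 * Nat.log 2 n : ℕ) * 4) ^ m ≤
      ENNReal.ofReal (4 * 17 ^ m * ψ * plog n ^ m) := by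
  have hL : 1 + 8 * (Nat.log 2 n : ℝ) ≤ 17 * plog n := by
    linarith [natLog_two_le_two_mul_plog n, show (1 : ℝ) ≤ plog n from le_max_right _ _]
  calc 4 * ENNReal.ofReal ψ * (1 + (2 * Nat.log 2 n : ℕ) * 4) ^ m
      = ENNReal.ofReal (4 * ψ * (1 + 8 * Nat.log 2 n) ^ m) := by
        rw [ENNReal.ofReal_mul (by positivity), ENNReal.ofReal_mul zero_le_four,
          ENNReal.ofReal_pow (by positivity), ENNReal.ofReal_ofNat,
          show (1 : ℝ) + 8 * Nat.log 2 n = (1 + 2 * Nat.log 2 n * 4 : ℕ) by push_cast; ring,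
          ENNReal.ofReal_natCast]
        push_cast
        rfl
    _ ≤ ENNReal.ofReal (4 * ψ * (17 * plog n) ^ m) := by gcongr
    _ = ENNReal.ofReal (4 * 17 ^ m * ψ * plog n ^ m) := by ring_nf

/-- Convergence-part measure bound: for `k ≥ 2`, `γ₁,…,γ_k ∈ (-1,0]` and
`ψ(n) ≥ n⁻²`, the set
`A_n = {α ∈ [0,1]^k : ‖nα₁-γ₁‖⋯‖nα_k-γ_k‖ < ψ(n)}` satisfies
`μ_k(A_n) ≪_k ψ(n) (log n)^{k-1}`. -/
theorem convergence_measure_bound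
    (k : ℕ) (hk : 2 ≤ k) :
    ∃ Ck : ℝ, 0 < Ck ∧
      ∀ n : ℕ, 0 < n → ∀ γ : Fin k → ℝ, (∀ i, γ i ∈ Set.Ioc (-1 : ℝ) 0) →
        ∀ ψn : ℝ, ((n : ℝ) ^ 2)⁻¹ ≤ ψn →
          volume {α : Fin k → ℝ | (∀ i, α i ∈ Set.Icc (0 : ℝ) 1) ∧
              (∏ i, nint ((n : ℝ) * α i - γ i)) < ψn}
            ≤ ENNReal.ofReal (Ck * ψn * plog n ^ (k - 1)) := by
  obtain ⟨m, rfl⟩ : ∃ m, k = m + 1 := ⟨k - 1, by omega⟩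
  refine ⟨4 * 17 ^ m, by positivity, fun n hn γ _ ψn hψ => ?_⟩
  have hψ0 : 0 < ψn := lt_of_lt_of_le (by positivity) hψ
  have hset : {α : Fin (m + 1) → ℝ | (∀ i, α i ∈ Icc (0 : ℝ) 1) ∧
      (∏ i, nint ((n : ℝ) * α i - γ i)) < ψn} = {α | (∀ i, α i ∈ Icc (0 : ℝ) 1) ∧
      α ∈ {α | ∏ i, ENNReal.ofReal (nint (n * α i - γ i)) < ENNReal.ofReal ψn}} := by
    ext α
    simp [← ENNReal.ofReal_prod_of_nonneg fun i _ => nint_nonneg _,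
      ENNReal.ofReal_lt_ofReal_iff hψ0]
  rw [hset, volume_pi, pi_setOf_forall_mem_and _ measurableSet_Icc, Nat.add_sub_cancel]
  calc _ ≤ 4 * ENNReal.ofReal ψn * (1 + (2 * Nat.log 2 n : ℕ) * 4) ^ m :=
        measure_pi_setOf_prod_lt_le (fun i => by fun_prop)
          (fun i x => ENNReal.ofReal_le_one.2 (nint_le_one _))
          (fun i => restrict_Icc_setOf_ofReal_nint_lt_le hn (γ i))
          (inv_four_mul_ofReal_le_two_pow hn hψ)
    _ ≤ ENNReal.ofReal (4 * 17 ^ m * ψn * plog n ^ m) :=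
        four_mul_ofReal_mul_one_add_natLog_pow_le n m hψ0.le
end
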